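/- arXiv:1608.04279 — 8 statements merged into one kernel-verified Lean document; each statement's English description precedes it below -/
import Mathlib

section
/- Let d ≥ 1 and 2 ≤ k ≤ r be integers, and let n ≥ 0. Suppose there is a family of n points a : Fin n → ℝ^d such that for every function I : Fin n → Fin r (assigning each index to one of r parts) there exists a k-element subset S ⊆ Fin r with ⋂_{i ∈ S} conv{a_j : I(j) = i} = ∅. Then there is a family of n + k − 1 points b : Fin (n+k−1) → ℝ^{d+1} with the same property: for every assignment I : Fin (n+k−1) → Fin r there exists a k-element subset S ⊆ Fin r with ⋂_{i ∈ S} conv{b_j : I(j) = i} = ∅. (This is the inductive step proving T(d+1,r,k) ≥ T(d,r,k) + k − 1.) -/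
/-!
Lift the `n` points into the hyperplane `x_{d+1} = 0` of `ℝ^(d+1)` and add `k - 1` points
at height `1`. Restricted to the old points, a partition of the new family has `k` parts whose
hulls miss each other in `ℝ^d`. The new points meet at most `k - 1` of these parts, so some part
lies in the hyperplane, and a common point `z` of the `k` hulls has height `0`. Since every point
has height `≥ 0`, the hyperplane is a face of each hull, so `z` is a convex combination of old
points of each part, and dropping the last coordinate yields a common point downstairs.
-/

open Finset

section Face

variable {𝕜 E : Type*} [Field 𝕜] [LinearOrder 𝕜] [IsStrictOrderedRing 𝕜]
  [AddCommGroup E] [Module 𝕜 E] {f : E →ₗ[𝕜] 𝕜}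

lemma convex_setOf_pos_union {t : Set E} (ht : Convex 𝕜 t) (htf : ∀ x ∈ t, f x = 0) :
    Convex 𝕜 ({x | 0 < f x} ∪ t) := by
  intro x hx y hy a b ha hb hab
  have hnonneg : ∀ x ∈ {x | 0 < f x} ∪ t, 0 ≤ f x := by
    rintro x (hx | hx)
    exacts [le_of_lt hx, (htf x hx).ge]
  rcases ha.eq_or_lt with rfl | ha'
  · rw [zero_add] at hab
    simpa [hab] using hy
  rcases hb.eq_or_lt with rfl | hb'
  · rw [add_zero] at hab
    simpa [hab] using hx
  by_cases hxy : x ∈ t ∧ y ∈ t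
  · exact Or.inr (ht hxy.1 hxy.2 ha hb hab)
  left
  have hpos : 0 < a * f x + b * f y := by
    rcases not_and_or.1 hxy with hxt | hyt
    · exact add_pos_of_pos_of_nonneg (mul_pos ha' (hx.resolve_right hxt))
        (mul_nonneg hb (hnonneg y hy))
    · exact add_pos_of_nonneg_of_pos (mul_nonneg ha (hnonneg x hx))
        (mul_pos hb' (hy.resolve_right hyt))
  simpa using hpos

theorem convexHull_inter_ker {s : Set E} (hs : ∀ x ∈ s, 0 ≤ f x) :
    convexHull 𝕜 s ∩ LinearMap.ker f = convexHull 𝕜 (s ∩ LinearMap.ker f) := by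
  have hker : convexHull 𝕜 (s ∩ LinearMap.ker f) ⊆ LinearMap.ker f :=
    convexHull_min Set.inter_subset_right (Submodule.convex _)
  refine subset_antisymm ?_ (Set.subset_inter (convexHull_mono Set.inter_subset_left) hker)
  rintro z ⟨hz, hfz⟩
  have hsub : s ⊆ {x | 0 < f x} ∪ convexHull 𝕜 (s ∩ LinearMap.ker f) := by
    intro x hx
    rcases (hs x hx).lt_or_eq with hpos | hzero
    · exact Or.inl hpos
    · exact Or.inr (subset_convexHull 𝕜 _ ⟨hx, hzero.symm⟩)
  have hz' := convexHull_min hsub (convex_setOf_pos_union (convex_convexHull 𝕜 _)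
    fun _ hx => hker hx) hz
  exact hz'.resolve_left fun hpos => ne_of_gt hpos (LinearMap.mem_ker.1 hfz)

end Face

section Reay

variable {E F ι ι' κ : Type*} [AddCommGroup E] [Module ℝ E] [AddCommGroup F] [Module ℝ F]
  {r k : ℕ} {a : ι → E}

/-- `I : ι → Fin r` encodes a partition into `r` parts; a Reay partition is one in which every
`k` parts have intersecting convex hulls. -/
def HasNoReayPartition (r k : ℕ) (a : ι → E) : Prop :=
  ∀ I : ι → Fin r, ∃ S : Finset (Fin r), S.card = k ∧
    (⋂ i ∈ S, convexHull ℝ (a '' {j | I j = i})) = ∅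

lemma HasNoReayPartition.comp_equiv (h : HasNoReayPartition r k a) (e : ι' ≃ ι) :
    HasNoReayPartition r k (a ∘ e) := by
  intro I
  obtain ⟨S, hS, hempty⟩ := h (I ∘ e.symm)
  refine ⟨S, hS, ?_⟩
  simp_rw [Set.image_comp, e.image_eq_preimage_symm]
  exact hempty

lemma HasNoReayPartition.map_linearEquiv (h : HasNoReayPartition r k a) (L : E ≃ₗ[ℝ] F) :
    HasNoReayPartition r k (L ∘ a) := by
  intro I
  obtain ⟨S, hS, hempty⟩ := h I
  refine ⟨S, hS, ?_⟩
  simp_rw [Set.image_comp, ← L.coe_toLinearMap, ← LinearMap.image_convexHull]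
  rw [← Set.image_iInter₂ (f := (L : E →ₗ[ℝ] F)) L.bijective, hempty, Set.image_empty]

theorem HasNoReayPartition.sumElim_of_snd_pos [Fintype κ] (h : HasNoReayPartition r k a)
    {c : κ → E × ℝ} (hc : ∀ j, 0 < (c j).2) (hκ : Fintype.card κ < k) :
    HasNoReayPartition r k (Sum.elim (fun j => (a j, 0)) c) := by
  classical
  set b : ι ⊕ κ → E × ℝ := Sum.elim (fun j => (a j, 0)) c
  set height := LinearMap.snd ℝ E ℝ
  intro I
  obtain ⟨S, hS, hempty⟩ := h (I ∘ Sum.inl)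
  refine ⟨S, hS, Set.eq_empty_of_forall_notMem fun z hz => ?_⟩
  rw [Set.mem_iInter₂] at hz
  obtain ⟨i₀, hi₀S, hi₀⟩ := exists_mem_notMem_of_card_lt_card
    (s := univ.image (I ∘ Sum.inr)) (t := S) (card_image_le.trans_lt (by simpa [hS]))
  have hz₀ : z ∈ LinearMap.ker height := by
    refine convexHull_min ?_ (Submodule.convex _) (hz i₀ hi₀S)
    rintro _ ⟨j | j, hj, rfl⟩
    · simp [b, height]
    · simp only [mem_image, mem_univ, true_and, Function.comp_apply, not_exists] at hi₀
      exact absurd hj (hi₀ j)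
  refine Set.eq_empty_iff_forall_notMem.1 hempty z.1 (Set.mem_iInter₂.2 fun i hi => ?_)
  have hnonneg : ∀ x ∈ b '' {j | I j = i}, 0 ≤ height x := by
    rintro _ ⟨j | j, -, rfl⟩
    exacts [le_rfl, (hc j).le]
  have hface : z ∈ convexHull ℝ (b '' {j | I j = i} ∩ LinearMap.ker height) :=
    convexHull_inter_ker hnonneg ▸ ⟨hz i hi, hz₀⟩
  have hdown : LinearMap.fst ℝ E ℝ '' (b '' {j | I j = i} ∩ LinearMap.ker height) ⊆
      a '' {j | (I ∘ Sum.inl) j = i} := by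
    rintro _ ⟨_, ⟨⟨j | j, hj, rfl⟩, hker⟩, rfl⟩
    · exact ⟨j, hj, rfl⟩
    · exact absurd hker (by simpa [b, height] using (hc j).ne')
  exact convexHull_mono hdown
    ((LinearMap.fst ℝ E ℝ).image_convexHull _ ▸ Set.mem_image_of_mem _ hface)

end Reay

theorem reay_lower_bound_step_general (d r k n : ℕ) (hk : 2 ≤ k)
    (a : Fin n → EuclideanSpace ℝ (Fin d))
    (ha : ∀ I : Fin n → Fin r, ∃ S : Finset (Fin r), S.card = k ∧
      (⋂ i ∈ S, convexHull ℝ (a '' {j | I j = i})) = ∅) :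
    ∃ b : Fin (n + k - 1) → EuclideanSpace ℝ (Fin (d + 1)),
      ∀ I : Fin (n + k - 1) → Fin r, ∃ S : Finset (Fin r), S.card = k ∧
        (⋂ i ∈ S, convexHull ℝ (b '' {j | I j = i})) = ∅ := by
  have hlift := HasNoReayPartition.sumElim_of_snd_pos ha
    (c := fun _ : Fin (k - 1) => ((0 : EuclideanSpace ℝ (Fin d)), (1 : ℝ)))
    (fun _ => one_pos) (by rw [Fintype.card_fin]; omega)
  let L := LinearEquiv.ofFinrankEq (R := ℝ) (EuclideanSpace ℝ (Fin d) × ℝ)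
    (EuclideanSpace ℝ (Fin (d + 1))) (by simp)
  let e : Fin (n + k - 1) ≃ Fin n ⊕ Fin (k - 1) := (finCongr (by omega)).trans finSumFinEquiv.symm
  exact ⟨_, (hlift.map_linearEquiv L).comp_equiv e⟩

/-- Inductive step for the lower bound `T(d+1,r,k) ≥ T(d,r,k) + k - 1` in Reay's
relaxed Tverberg problem: if there are `n` points in `ℝ^d` such that every partition
of the index set into `r` parts has `k` parts whose convex hulls have empty
intersection, then there are `n + k - 1` points in `ℝ^(d+1)` with the same property. -/
theorem reay_lower_bound_step (d r k n : ℕ) (hd : 1 ≤ d) (hk : 2 ≤ k) (hkr : k ≤ r)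
    (a : Fin n → EuclideanSpace ℝ (Fin d))
    (ha : ∀ I : Fin n → Fin r, ∃ S : Finset (Fin r), S.card = k ∧
      (⋂ i ∈ S, convexHull ℝ (a '' {j | I j = i})) = ∅) :
    ∃ b : Fin (n + k - 1) → EuclideanSpace ℝ (Fin (d + 1)),
      ∀ I : Fin (n + k - 1) → Fin r, ∃ S : Finset (Fin r), S.card = k ∧
        (⋂ i ∈ S, convexHull ℝ (b '' {j | I j = i})) = ∅ :=
  reay_lower_bound_step_general d r k n hk a ha
end

section
/- Let d ≥ 1 and 2 ≤ k ≤ r be integers. Let X ⊆ ℝ^d be a finite set in strong general position, and suppose X admits a partition into r pairwise disjoint subsets X_1, …, X_r (with X = X_1 ∪ … ∪ X_r) such that for every k-element subset S ⊆ {1,…,r} the intersection ⋂_{i∈S} conv(X_i) is nonempty. Then k · |X| ≥ r · ((k−1)·d + k), i.e. |X| ≥ r((k−1)d/k + 1). -/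
/-!
If `k` parts have a common point in their convex hulls, that point lies in the intersection of
their affine spans, so strong general position forces the codimensions of the spans to add up to
at most `d`. As `m` points span a flat of dimension at most `m - 1`, any `k` parts contain at
least `(k - 1) d + k` points together. Averaging over all `k`-subsets of the `r` parts, each part
lying in `C(r - 1, k - 1)` of the `C(r, k)` subsets, gives `r ((k - 1) d + k) ≤ k |X|`.
-/

/-- A set `X ⊆ ℝ^d` is in *strong general position* if for every `s ≥ 2` and all
pairwise disjoint nonempty subsets `Y 0, …, Y (s-1)` of `X`, either the intersection
of their affine spans is empty, or its codimension equals the sum of the codimensions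
of the affine spans. -/
def StrongGeneralPosition {d : ℕ} (X : Set (EuclideanSpace ℝ (Fin d))) : Prop :=
  ∀ s : ℕ, 2 ≤ s → ∀ Y : Fin s → Set (EuclideanSpace ℝ (Fin d)),
    (∀ i, Y i ⊆ X) → (∀ i, (Y i).Nonempty) →
    Pairwise (Function.onFun Disjoint Y) →
    ((⨅ i, affineSpan ℝ (Y i) : AffineSubspace ℝ (EuclideanSpace ℝ (Fin d))) :
        Set (EuclideanSpace ℝ (Fin d))) = ∅ ∨
      d - Module.finrank ℝ (⨅ i, affineSpan ℝ (Y i)).direction =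
        ∑ i, (d - Module.finrank ℝ (affineSpan ℝ (Y i)).direction)

open Finset Module Function

theorem Finset.finrank_vectorSpan_add_one_le_card {k V P : Type*} [DivisionRing k]
    [AddCommGroup V] [Module k V] [AddTorsor V P] {s : Finset P} (hs : s.Nonempty) :
    finrank k (vectorSpan k (s : Set P)) + 1 ≤ #s := by
  classical
  obtain ⟨n, hn⟩ := Nat.exists_eq_succ_of_ne_zero hs.card_pos.ne'
  have := finrank_vectorSpan_image_finset_le k id s hn
  rw [image_id] at this
  omega

theorem Finset.sum_powersetCard_sum {ι M : Type*} [Fintype ι] [DecidableEq ι]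
    [AddCommMonoid M] (k : ℕ) (f : ι → M) :
    ∑ S ∈ powersetCard (k + 1) univ, ∑ i ∈ S, f i =
      (Fintype.card ι - 1).choose k • ∑ i, f i := by
  rw [sum_comm' (t' := univ) (s' := fun i => {S ∈ powersetCard (k + 1) univ | {i} ⊆ S})
    (fun S i => by simp [and_comm]), smul_sum]
  refine sum_congr rfl fun i _ => ?_
  rw [sum_const, card_filter_powersetCard_subset _ _ _ (subset_univ _) (by simp)]
  simp

theorem Finset.card_mul_le_mul_sum_of_forall_card_eq {ι : Type*} [Fintype ι] {k c : ℕ}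
    (f : ι → ℕ) (hk : k ≤ Fintype.card ι) (h : ∀ S : Finset ι, #S = k → c ≤ ∑ i ∈ S, f i) :
    Fintype.card ι * c ≤ k * ∑ i, f i := by
  classical
  rcases k with _ | k
  · simp [show c = 0 by simpa using h ∅ rfl]
  have hcount : (Fintype.card ι).choose (k + 1) * c ≤ (Fintype.card ι - 1).choose k * ∑ i, f i :=
    calc (Fintype.card ι).choose (k + 1) * c
        = ∑ S ∈ powersetCard (k + 1) univ, c := by simp [mul_comm]
      _ ≤ ∑ S ∈ powersetCard (k + 1) univ, ∑ i ∈ S, f i :=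
        sum_le_sum fun S hS => h S (mem_powersetCard.1 hS).2
      _ = (Fintype.card ι - 1).choose k * ∑ i, f i := sum_powersetCard_sum k f
  have hpascal := Nat.add_one_mul_choose_eq (Fintype.card ι - 1) k
  rw [Nat.sub_add_cancel (by omega)] at hpascal
  refine Nat.le_of_mul_le_mul_left ?_ (Nat.choose_pos (by omega : k ≤ Fintype.card ι - 1))
  calc (Fintype.card ι - 1).choose k * (Fintype.card ι * c)
      = (k + 1) * ((Fintype.card ι).choose (k + 1) * c) := by
        rw [mul_left_comm, ← mul_assoc, hpascal]; ring
    _ ≤ (k + 1) * ((Fintype.card ι - 1).choose k * ∑ i, f i) := Nat.mul_le_mul_left _ hcount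
    _ = (Fintype.card ι - 1).choose k * ((k + 1) * ∑ i, f i) := mul_left_comm ..

namespace StrongGeneralPosition

variable {d : ℕ} {X : Set (EuclideanSpace ℝ (Fin d))} {ι : Type*} [Fintype ι]

theorem sum_codim_le (hX : StrongGeneralPosition X) (hι : 2 ≤ Fintype.card ι)
    {Y : ι → Set (EuclideanSpace ℝ (Fin d))} (hYX : ∀ i, Y i ⊆ X) (hY : ∀ i, (Y i).Nonempty)
    (hdisj : Pairwise (Disjoint on Y))
    (hmeet : ((⨅ i, affineSpan ℝ (Y i) : AffineSubspace ℝ _) :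
      Set (EuclideanSpace ℝ (Fin d))).Nonempty) :
    ∑ i, (d - finrank ℝ (affineSpan ℝ (Y i)).direction) ≤ d := by
  set e := (Fintype.equivFin ι).symm
  obtain hempty | hcodim := hX _ hι (Y ∘ e) (fun j => hYX _) (fun j => hY _)
    (hdisj.comp_of_injective e.injective)
  · rw [Function.comp_def, e.iInf_comp (g := fun i => affineSpan ℝ (Y i))] at hempty
    exact absurd hempty hmeet.ne_empty
  · rw [← e.sum_comp]
    exact hcodim ▸ Nat.sub_le _ _

theorem le_sum_card (hX : StrongGeneralPosition X) (hι : 2 ≤ Fintype.card ι)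
    {Y : ι → Finset (EuclideanSpace ℝ (Fin d))}
    (hYX : ∀ i, (Y i : Set (EuclideanSpace ℝ (Fin d))) ⊆ X) (hdisj : Pairwise (Disjoint on Y))
    (hmeet : (⋂ i, convexHull ℝ (Y i : Set (EuclideanSpace ℝ (Fin d)))).Nonempty) :
    (Fintype.card ι - 1) * d + Fintype.card ι ≤ ∑ i, #(Y i) := by
  obtain ⟨x, hx⟩ := hmeet
  rw [Set.mem_iInter] at hx
  have hY : ∀ i, (Y i).Nonempty := fun i =>
    coe_nonempty.1 (convexHull_nonempty_iff.1 ⟨x, hx i⟩)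
  have hcodim := hX.sum_codim_le hι hYX (fun i => coe_nonempty.2 (hY i))
    (fun i j hij => disjoint_coe.2 (hdisj hij))
    ⟨x, by simpa using fun i => convexHull_subset_affineSpan _ (hx i)⟩
  have hpoint : ∀ i, d + 1 ≤
      (d - finrank ℝ (affineSpan ℝ (Y i : Set (EuclideanSpace ℝ (Fin d)))).direction) + #(Y i) :=
    fun i => by
      have := Finset.finrank_vectorSpan_add_one_le_card (k := ℝ) (hY i)
      rw [direction_affineSpan]
      omega
  have htotal : Fintype.card ι * (d + 1) ≤ d + ∑ i, #(Y i) :=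
    calc Fintype.card ι * (d + 1) = ∑ _i : ι, (d + 1) := by simp
      _ ≤ ∑ i, ((d - finrank ℝ (affineSpan ℝ (Y i : Set (EuclideanSpace ℝ (Fin d)))).direction)
          + #(Y i)) := sum_le_sum fun i _ => hpoint i
      _ ≤ d + ∑ i, #(Y i) := by rw [sum_add_distrib]; exact Nat.add_le_add_right hcodim _
  rw [Nat.mul_succ] at htotal
  rw [Nat.sub_one_mul]
  have := Nat.le_mul_of_pos_left d (by omega : 0 < Fintype.card ι)
  omega

end StrongGeneralPosition

theorem reay_strong_general_position_bound_general (d r k : ℕ) (hk : 2 ≤ k)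
    (hkr : k ≤ r) (X : Finset (EuclideanSpace ℝ (Fin d)))
    (hsgp : StrongGeneralPosition (X : Set (EuclideanSpace ℝ (Fin d))))
    (P : Fin r → Finset (EuclideanSpace ℝ (Fin d)))
    (hdisj : Pairwise (Function.onFun Disjoint P))
    (hunion : (X : Set (EuclideanSpace ℝ (Fin d))) = ⋃ i, (P i : Set (EuclideanSpace ℝ (Fin d))))
    (hint : ∀ S : Finset (Fin r), S.card = k →
      (⋂ i ∈ S, convexHull ℝ (P i : Set (EuclideanSpace ℝ (Fin d)))).Nonempty) :
    r * ((k - 1) * d + k) ≤ k * X.card := by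
  classical
  have hPX : ∀ i, (P i : Set (EuclideanSpace ℝ (Fin d))) ⊆ X :=
    fun i => hunion ▸ Set.subset_iUnion (fun i => (P i : Set (EuclideanSpace ℝ (Fin d)))) i
  have hXcard : #X = ∑ i, #(P i) := by
    rw [show X = univ.biUnion P from coe_injective (by simpa using hunion),
      card_biUnion fun i _ j _ hij => hdisj hij]
  have hparts : ∀ S : Finset (Fin r), #S = k → (k - 1) * d + k ≤ ∑ i ∈ S, #(P i) := by
    intro S hS
    have hmeet : (⋂ i : S, convexHull ℝ (P i : Set (EuclideanSpace ℝ (Fin d)))).Nonempty := by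
      simpa [Set.iInter_subtype] using hint S hS
    rw [← sum_coe_sort S, ← hS, ← Fintype.card_coe S]
    exact hsgp.le_sum_card (Y := fun i : S => P i) (by simpa [hS] using hk) (fun i => hPX i)
      (hdisj.comp_of_injective Subtype.val_injective) hmeet
  simpa [hXcard] using
    card_mul_le_mul_sum_of_forall_card_eq (fun i => #(P i)) (by simpa using hkr) hparts

/-- If a finite set `X ⊆ ℝ^d` in strong general position admits a partition into `r`
pairwise disjoint parts such that every `k` of the parts have intersecting convex
hulls, then `k·|X| ≥ r·((k-1)·d + k)`, i.e. `|X| ≥ r((k-1)d/k + 1)`. -/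
theorem reay_strong_general_position_bound (d r k : ℕ) (hd : 1 ≤ d) (hk : 2 ≤ k)
    (hkr : k ≤ r) (X : Finset (EuclideanSpace ℝ (Fin d)))
    (hsgp : StrongGeneralPosition (X : Set (EuclideanSpace ℝ (Fin d))))
    (P : Fin r → Finset (EuclideanSpace ℝ (Fin d)))
    (hdisj : Pairwise (Function.onFun Disjoint P))
    (hunion : (X : Set (EuclideanSpace ℝ (Fin d))) = ⋃ i, (P i : Set (EuclideanSpace ℝ (Fin d))))
    (hint : ∀ S : Finset (Fin r), S.card = k →
      (⋂ i ∈ S, convexHull ℝ (P i : Set (EuclideanSpace ℝ (Fin d)))).Nonempty) :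
    r * ((k - 1) * d + k) ≤ k * X.card :=
  reay_strong_general_position_bound_general d r k hk hkr X hsgp P hdisj hunion hint
end

section
/- Let d ≥ 1, r ≥ 2, and ⌈r/2⌉ < k ≤ r be integers. There exist points c_{j,s} ∈ ℝ^d, indexed by pairs (j,s) with j ∈ {0,1,…,d} and s ∈ {1,…,r} for j ≥ 1, while s ∈ {1,…,r−1} for j = 0 (points not necessarily distinct), with the following property: for all pairwise disjoint subsets X_1, …, X_r of the index set such that each X_i contains, for every j, at most one pair with first coordinate j (i.e. X_i picks at most one point from each color class C_j), there exist k indices i_1 < … < i_k in {1,…,r} with ⋂_{l=1}^{k} conv{c_p : p ∈ X_{i_l}} = ∅. -/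
/-!
Put the `r - 1` points of `C₀` at the origin and the points of `C_{j+1}` at `±e_j`, the first
`⌈r/2⌉ = (r + 1) / 2` of them at `+e_j`. Since `C₀` has only `r - 1` points, some part `X_{i₀}`
avoids it; being rainbow, its points are orthonormal, hence lie on an affine hyperplane missing
the origin, so a common point `x` of the hulls has some coordinate `x_j ≠ 0`. Each hull containing
`x` then contains a point of `C_{j+1}` strictly on the same side of `{x_j = 0}` as `x`. These points
are distinct for disjoint parts, and either side holds at most `⌈r/2⌉ < k` of them.
-/

open Set Finset Function

theorem Finset.card_le_card_of_forall_exists_mem_of_disjoint {ι α : Type*} {X : ι → Set α}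
    (hX : Pairwise (Disjoint on X)) {S : Finset ι} {T : Finset α}
    (h : ∀ i ∈ S, ∃ a ∈ T, a ∈ X i) : #S ≤ #T :=
  card_le_card_of_forall_subsingleton (fun i a => a ∈ X i) h fun a _ _ hi _ hi' =>
    hX.eq (Set.not_disjoint_iff.2 ⟨a, hi.2, hi'.2⟩)

theorem exists_forall_notMem_of_card_lt {ι α β : Type*} [Fintype ι] [Fintype β] {X : ι → Set α}
    (hX : Pairwise (Disjoint on X)) (f : β → α) (h : Fintype.card β < Fintype.card ι) :
    ∃ i, ∀ b, f b ∉ X i := by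
  classical
  by_contra! hf
  have hle := (card_le_card_of_forall_exists_mem_of_disjoint hX (S := univ)
    (T := univ.image f) fun i _ => by simpa using hf i).trans card_image_le
  rw [card_univ, card_univ] at hle
  omega

theorem Orthonormal.zero_notMem_convexHull_range {ι E : Type*} [Fintype ι]
    [NormedAddCommGroup E] [InnerProductSpace ℝ E] {v : ι → E} (hv : Orthonormal ℝ v) :
    (0 : E) ∉ convexHull ℝ (range v) := by
  let φ : E →ₗ[ℝ] ℝ := innerₛₗ ℝ (∑ i, v i)
  have hφ : range v ⊆ φ ⁻¹' {1} := by
    rintro _ ⟨i, rfl⟩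
    have := hv.inner_left_fintype 1 i
    simp only [Pi.one_apply, one_smul, map_one] at this
    exact this
  intro h0
  simpa [φ] using convexHull_min hφ ((convex_singleton 1).linear_preimage φ) h0

theorem exists_mem_pos_of_mem_convexHull {E : Type*} [AddCommGroup E] [Module ℝ E]
    (φ : E →ₗ[ℝ] ℝ) {A : Set E} {x : E} (hx : x ∈ convexHull ℝ A) (hφx : 0 < φ x) :
    ∃ a ∈ A, 0 < φ a := by
  obtain ⟨a, ha, hle⟩ := (φ.convexOn convex_univ).exists_ge_of_mem_convexHull (subset_univ A) hx
  exact ⟨a, ha, hφx.trans_le hle⟩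

namespace ColoredReay

variable {d r : ℕ}

def sgn (r : ℕ) (s : Fin r) : ℝ := if (s : ℕ) < (r + 1) / 2 then 1 else -1

noncomputable def point (d r : ℕ) : Fin (r - 1) ⊕ Fin d × Fin r → EuclideanSpace ℝ (Fin d) :=
  Sum.elim 0 fun p => EuclideanSpace.single p.1 (sgn r p.2)

theorem sgn_of_lt {s : Fin r} (hs : (s : ℕ) < (r + 1) / 2) : sgn r s = 1 := if_pos hs

theorem sgn_of_not_lt {s : Fin r} (hs : ¬ (s : ℕ) < (r + 1) / 2) : sgn r s = -1 := if_neg hs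

theorem sgn_eq_one_or_eq_neg_one (s : Fin r) : sgn r s = 1 ∨ sgn r s = -1 :=
  (em _).imp sgn_of_lt sgn_of_not_lt

theorem card_filter_pos_mul_sgn_le (a : ℝ) : #{s : Fin r | 0 < a * sgn r s} ≤ (r + 1) / 2 := by
  have hlt : #{s : Fin r | (s : ℕ) < (r + 1) / 2} = min r ((r + 1) / 2) := Fin.card_filter_val_lt
  have hcompl := card_filter_add_card_filter_not (s := univ) fun s : Fin r => (s : ℕ) < (r + 1) / 2
  rw [card_univ, Fintype.card_fin] at hcompl
  rcases le_or_gt a 0 with ha | ha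
  · calc _ ≤ #{s : Fin r | ¬ (s : ℕ) < (r + 1) / 2} := by
          gcongr with s
          intro hpos hs
          rw [sgn_of_lt hs] at hpos
          linarith
      _ ≤ (r + 1) / 2 := by omega
  · calc _ ≤ #{s : Fin r | (s : ℕ) < (r + 1) / 2} := by
          gcongr with s
          intro hpos
          by_contra hs
          rw [sgn_of_not_lt hs] at hpos
          linarith
      _ ≤ (r + 1) / 2 := by omega

theorem orthonormal_point {X : Set (Fin (r - 1) ⊕ Fin d × Fin r)}
    (hX : ∀ j s t, Sum.inr (j, s) ∈ X → Sum.inr (j, t) ∈ X → s = t) :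
    Orthonormal ℝ fun p : {p : Fin d × Fin r // Sum.inr p ∈ X} => point d r (Sum.inr p) := by
  classical
  rw [orthonormal_iff_ite]
  rintro ⟨⟨j, s⟩, hs⟩ ⟨⟨j', t⟩, ht⟩
  by_cases hj : j = j'
  · subst hj
    obtain rfl := hX j s t hs ht
    simpa [point] using sgn_eq_one_or_eq_neg_one s
  · simp [point, EuclideanSpace.inner_single_left, hj]

theorem zero_notMem_convexHull_image_point {X : Set (Fin (r - 1) ⊕ Fin d × Fin r)}
    (hX₀ : ∀ p, Sum.inl p ∉ X)
    (hX : ∀ j s t, Sum.inr (j, s) ∈ X → Sum.inr (j, t) ∈ X → s = t) :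
    (0 : EuclideanSpace ℝ (Fin d)) ∉ convexHull ℝ (point d r '' X) := by
  classical
  have : point d r '' X =
      range fun p : {p : Fin d × Fin r // Sum.inr p ∈ X} => point d r (Sum.inr p) := by
    ext y
    constructor
    · rintro ⟨p | p, hp, rfl⟩
      · exact absurd hp (hX₀ p)
      · exact ⟨⟨p, hp⟩, rfl⟩
    · rintro ⟨⟨p, hp⟩, rfl⟩
      exact ⟨_, hp, rfl⟩
  rw [this]
  exact (orthonormal_point hX).zero_notMem_convexHull_range

theorem exists_mem_pos_mul_sgn {X : Set (Fin (r - 1) ⊕ Fin d × Fin r)}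
    {x : EuclideanSpace ℝ (Fin d)} (hx : x ∈ convexHull ℝ (point d r '' X)) {j : Fin d}
    (hj : x j ≠ 0) : ∃ s, Sum.inr (j, s) ∈ X ∧ 0 < x j * sgn r s := by
  let φ : EuclideanSpace ℝ (Fin d) →ₗ[ℝ] ℝ := x j • (EuclideanSpace.proj j).toLinearMap
  obtain ⟨_, ⟨p, hp, rfl⟩, hpos⟩ := exists_mem_pos_of_mem_convexHull φ hx (mul_self_pos.2 hj)
  rcases p with p | ⟨j', s⟩
  · simp [φ, point] at hpos
  · obtain rfl : j = j' := by
      by_contra h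
      simp [φ, point, h] at hpos
    exact ⟨s, hp, by simpa [φ, point] using hpos⟩

end ColoredReay

open ColoredReay in
theorem colored_reay_general (d r k : ℕ)
    (hk₁ : (r + 1) / 2 < k) (hk₂ : k ≤ r) :
    ∃ c : (Fin (r - 1) ⊕ Fin d × Fin r) → EuclideanSpace ℝ (Fin d),
      ∀ X : Fin r → Set (Fin (r - 1) ⊕ Fin d × Fin r),
        Pairwise (Function.onFun Disjoint X) →
        (∀ i, ∀ p q : Fin (r - 1), Sum.inl p ∈ X i → Sum.inl q ∈ X i → p = q) →
        (∀ i, ∀ j : Fin d, ∀ s t : Fin r,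
          Sum.inr (j, s) ∈ X i → Sum.inr (j, t) ∈ X i → s = t) →
        ∃ S : Finset (Fin r), S.card = k ∧
          (⋂ i ∈ S, convexHull ℝ (c '' X i)) = ∅ := by
  classical
  refine ⟨point d r, fun X hX _ hrainbow => ?_⟩
  obtain ⟨i₀, hi₀⟩ := exists_forall_notMem_of_card_lt hX Sum.inl (by simp; omega)
  obtain ⟨S, hi₀S, hS⟩ :=
    exists_superset_card_eq (s := {i₀}) (n := k) (by simp; omega) (by simpa)
  refine ⟨S, hS, eq_empty_of_forall_notMem fun x hx => ?_⟩
  rw [mem_iInter₂] at hx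
  obtain ⟨j, hj⟩ : ∃ j, x j ≠ 0 := by
    by_contra! h
    have : x = 0 := by ext j; simpa using h j
    exact zero_notMem_convexHull_image_point hi₀ (hrainbow i₀)
      (this ▸ hx i₀ (hi₀S (mem_singleton_self i₀)))
  have hcard := card_le_card_of_forall_exists_mem_of_disjoint hX (S := S)
    (T := ({s | 0 < x j * sgn r s} : Finset (Fin r)).image fun s => Sum.inr (j, s))
    fun i hi => by simpa [and_comm] using exists_mem_pos_mul_sgn (hx i hi) hj
  have := hcard.trans (card_image_le.trans (card_filter_pos_mul_sgn_le (x j)))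
  omega

/-- Colored version of Reay's conjecture: for `d ≥ 1`, `r ≥ 2` and `⌈r/2⌉ < k ≤ r`
there are color classes `C₀` of size `r - 1` (indexed by `Fin (r-1)`, i.e. by
`Sum.inl`) and `C₁, …, C_d` each of size `r` (the class `C_{j+1}` indexed by the
pairs `Sum.inr (j, s)` with `s : Fin r`) of points in `ℝ^d` such that for all
pairwise disjoint rainbow subsets `X₁, …, X_r` of the index set (each using at most
one index from every color class) there are `k` of them whose convex hulls have
empty intersection. -/
theorem colored_reay (d r k : ℕ) (hd : 1 ≤ d) (hr : 2 ≤ r)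
    (hk₁ : (r + 1) / 2 < k) (hk₂ : k ≤ r) :
    ∃ c : (Fin (r - 1) ⊕ Fin d × Fin r) → EuclideanSpace ℝ (Fin d),
      ∀ X : Fin r → Set (Fin (r - 1) ⊕ Fin d × Fin r),
        Pairwise (Function.onFun Disjoint X) →
        (∀ i, ∀ p q : Fin (r - 1), Sum.inl p ∈ X i → Sum.inl q ∈ X i → p = q) →
        (∀ i, ∀ j : Fin d, ∀ s t : Fin r,
          Sum.inr (j, s) ∈ X i → Sum.inr (j, t) ∈ X i → s = t) →
        ∃ S : Finset (Fin r), S.card = k ∧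
          (⋂ i ∈ S, convexHull ℝ (c '' X i)) = ∅ :=
  colored_reay_general d r k hk₁ hk₂
end

section
/- Let d ≥ 2, let V be a finite set, let F be a finite family of d-element subsets of V (the facets, all distinct), and let f : V → ℝ^d be a map such that: (i) for each σ ∈ F the d points {f(v) : v ∈ σ} are affinely independent (so f embeds each facet); (ii) for any two distinct σ, τ ∈ F the set conv(f(σ)) ∩ conv(f(τ)) is nonempty and its affine span has dimension exactly d − 2 (i.e. the intersection is a (d−2)-ball, being a nonempty compact convex set of dimension d−2). Let m = |F| and let n be the number of ridges, i.e. n = |{ρ ⊆ V : |ρ| = d−1 and ρ ⊆ σ for some σ ∈ F}|. Then d·m ≤ 2·n. -/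
/-!
Homogenizing `f` (`q ↦ (1, q) ∈ ℝ × ℝ^d`) turns the facets into simplicial cones, any two of
which meet in a cone whose linear span has dimension `d - 1`. Dividing out the line through a
vertex `x` turns the cones through `x` into a configuration of the same kind one dimension lower
(the link of `x`), and double counting vertex–facet and vertex–ridge incidences reduces
`d·m ≤ 2·n` to the case `d = 2`.

For `d = 2` the facets are the edges of a graph whose planar cones pairwise meet in a ray. A leaf
can be deleted together with its edge. Without leaves no vertex `x` has three edges `xaᵢ`: modulo
`x` the three rays through the `aᵢ` are pairwise distinct, and the cone of another edge at `aᵢ`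
is a planar cone bounded by the `i`-th ray and containing the other two, which is impossible for
three rays. So every vertex has degree at most two, and `m ≤ n`.
-/

open Finset Module Submodule

section Faces

variable {V : Type*} [DecidableEq V]

def faces (F : Finset (Finset V)) (j : ℕ) : Finset (Finset V) :=
  F.biUnion (powersetCard j)

def link (F : Finset (Finset V)) (x : V) : Finset (Finset V) :=
  {σ ∈ F | x ∈ σ}.image (·.erase x)

lemma mem_faces {F : Finset (Finset V)} {j : ℕ} {ρ : Finset V} :
    ρ ∈ faces F j ↔ #ρ = j ∧ ∃ σ ∈ F, ρ ⊆ σ := by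
  simp only [faces, mem_biUnion, mem_powersetCard]
  tauto

lemma coe_faces (F : Finset (Finset V)) (j : ℕ) :
    (faces F j : Set (Finset V)) = {ρ | #ρ = j ∧ ∃ σ ∈ F, ρ ⊆ σ} :=
  Set.ext fun _ => mem_faces

lemma mem_link {F : Finset (Finset V)} {x : V} {ρ : Finset V} :
    ρ ∈ link F x ↔ ∃ σ ∈ F, x ∈ σ ∧ σ.erase x = ρ := by
  simp [link, and_assoc]

lemma card_link (F : Finset (Finset V)) (x : V) : #(link F x) = #{σ ∈ F | x ∈ σ} :=
  card_image_of_injOn fun σ hσ τ hτ h => by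
    simp only [coe_filter, Set.mem_ofPred_eq] at hσ hτ
    rw [← insert_erase hσ.2, ← insert_erase hτ.2, h]

lemma card_faces_link (F : Finset (Finset V)) (x : V) (j : ℕ) :
    #(faces (link F x) j) = #{ρ ∈ faces F (j + 1) | x ∈ ρ} := by
  refine card_bij' (fun ρ _ => insert x ρ) (fun ρ _ => ρ.erase x) ?_ ?_ ?_ ?_
  · intro ρ hρ
    obtain ⟨hcard, _, hσ, hρσ⟩ := mem_faces.mp hρ
    obtain ⟨σ, hσF, hxσ, rfl⟩ := mem_link.mp hσ
    have hxρ : x ∉ ρ := fun hx => (mem_erase.mp (hρσ hx)).1 rfl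
    refine mem_filter.mpr ⟨mem_faces.mpr ⟨?_, σ, hσF, ?_⟩, mem_insert_self x ρ⟩
    · rw [card_insert_of_notMem hxρ, hcard]
    · exact insert_subset hxσ (hρσ.trans (erase_subset x σ))
  · intro ρ hρ
    obtain ⟨hρF, hxρ⟩ := mem_filter.mp hρ
    obtain ⟨hcard, σ, hσF, hρσ⟩ := mem_faces.mp hρF
    refine mem_faces.mpr ⟨by rw [card_erase_of_mem hxρ, hcard, Nat.add_sub_cancel], σ.erase x,
      mem_link.mpr ⟨σ, hσF, hρσ hxρ, rfl⟩, erase_subset_erase x hρσ⟩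
  · intro ρ hρ
    obtain ⟨-, _, hσ, hρσ⟩ := mem_faces.mp hρ
    obtain ⟨σ, -, -, rfl⟩ := mem_link.mp hσ
    exact erase_insert fun hx => (mem_erase.mp (hρσ hx)).1 rfl
  · intro ρ hρ
    exact insert_erase (mem_filter.mp hρ).2

lemma sum_card_filter_mem (G : Finset (Finset V)) {U : Finset V} (hU : ∀ σ ∈ G, σ ⊆ U) :
    ∑ x ∈ U, #{σ ∈ G | x ∈ σ} = ∑ σ ∈ G, #σ := by
  have := sum_card_bipartiteAbove_eq_sum_card_bipartiteBelow (· ∈ ·) (s := U) (t := G)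
  simp only [bipartiteAbove, bipartiteBelow, filter_mem_eq_inter] at this
  rw [this]
  exact sum_congr rfl fun σ hσ => by rw [inter_eq_right.mpr (hU σ hσ)]

lemma subset_biUnion_of_mem_faces {F : Finset (Finset V)} {j : ℕ} {ρ : Finset V}
    (hρ : ρ ∈ faces F j) : ρ ⊆ F.biUnion id := by
  obtain ⟨-, σ, hσ, hρσ⟩ := mem_faces.mp hρ
  exact hρσ.trans (subset_biUnion_of_mem id hσ)

lemma sum_card_link {F : Finset (Finset V)} {k : ℕ} (hF : ∀ σ ∈ F, #σ = k) :
    ∑ x ∈ F.biUnion id, #(link F x) = k * #F := by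
  simp_rw [card_link]
  rw [sum_card_filter_mem F fun σ hσ => subset_biUnion_of_mem id hσ, sum_congr rfl hF,
    sum_const, smul_eq_mul, mul_comm]

lemma sum_card_faces_link (F : Finset (Finset V)) (j : ℕ) :
    ∑ x ∈ F.biUnion id, #(faces (link F x) j) = (j + 1) * #(faces F (j + 1)) := by
  simp_rw [card_faces_link]
  rw [sum_card_filter_mem _ fun ρ hρ => subset_biUnion_of_mem_faces hρ,
    sum_congr rfl fun ρ hρ => (mem_faces.mp hρ).1, sum_const, smul_eq_mul, mul_comm]

lemma card_faces_one (F : Finset (Finset V)) : #(faces F 1) = #(F.biUnion id) := by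
  have : faces F 1 = (F.biUnion id).image singleton := by
    ext ρ
    simp only [mem_faces, card_eq_one, mem_image, mem_biUnion, id]
    constructor
    · rintro ⟨⟨a, rfl⟩, σ, hσ, ha⟩
      exact ⟨a, ⟨σ, hσ, singleton_subset_iff.mp ha⟩, rfl⟩
    · rintro ⟨a, ⟨σ, hσ, ha⟩, rfl⟩
      exact ⟨⟨a, rfl⟩, σ, hσ, singleton_subset_iff.mpr ha⟩
  rw [this, card_image_of_injective _ singleton_injective]

lemma card_le_card_faces_one_of_card_filter_mem_le_two {F : Finset (Finset V)}
    (hF : ∀ σ ∈ F, #σ = 2) (hdeg : ∀ x, #{σ ∈ F | x ∈ σ} ≤ 2) : #F ≤ #(faces F 1) := by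
  have h := sum_card_link hF
  simp_rw [card_link] at h
  have hle : ∑ x ∈ F.biUnion id, #{σ ∈ F | x ∈ σ} ≤ 2 * #(F.biUnion id) := by
    simpa [mul_comm] using sum_le_sum fun x (_ : x ∈ F.biUnion id) => hdeg x
  rw [card_faces_one]
  omega

lemma exists_eq_pair_of_card_eq_two {σ : Finset V} {x : V} (hσ : #σ = 2) (hx : x ∈ σ) :
    ∃ a, x ≠ a ∧ σ = {x, a} := by
  obtain ⟨a, ha⟩ := card_eq_one.mp (by rw [card_erase_of_mem hx, hσ] : #(σ.erase x) = 1)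
  refine ⟨a, fun hxa => ?_, by rw [← insert_erase hx, ha]⟩
  exact (mem_erase.mp (ha ▸ mem_singleton_self a)).1 hxa.symm

lemma card_faces_erase_lt {F : Finset (Finset V)} {σ ρ : Finset V} (hσ : σ ∈ F) (hρσ : ρ ⊆ σ)
    (hρ : ∀ τ ∈ F, ρ ⊆ τ → τ = σ) : #(faces (F.erase σ) #ρ) < #(faces F #ρ) := by
  refine card_lt_card ⟨biUnion_subset_biUnion_of_subset_left _ (erase_subset σ F), fun h => ?_⟩
  obtain ⟨-, τ, hτ, hρτ⟩ := mem_faces.mp (h (mem_faces.mpr ⟨rfl, σ, hσ, hρσ⟩))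
  exact (mem_erase.mp hτ).1 (hρ τ (mem_of_mem_erase hτ) hρτ)

end Faces

section Cones

variable {E W : Type*} [AddCommGroup E] [Module ℝ E] [AddCommGroup W] [Module ℝ W]

namespace PointedCone

lemma mem_hull_singleton_iff {u w : E} : u ∈ hull ℝ {w} ↔ ∃ t : ℝ, 0 ≤ t ∧ t • w = u := by
  simp only [mem_span_singleton]
  exact ⟨fun ⟨t, ht⟩ => ⟨t, t.2, ht⟩, fun ⟨t, ht, h⟩ => ⟨⟨t, ht⟩, h⟩⟩

lemma mem_hull_pair_iff {u v w : E} :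
    u ∈ hull ℝ {v, w} ↔ ∃ s t : ℝ, 0 ≤ s ∧ 0 ≤ t ∧ s • v + t • w = u := by
  simp only [mem_span_pair]
  exact ⟨fun ⟨s, t, h⟩ => ⟨s, t, s.2, t.2, h⟩, fun ⟨s, t, hs, ht, h⟩ => ⟨⟨s, hs⟩, ⟨t, ht⟩, h⟩⟩

lemma exists_pos_of_mem_hull_pair {u v w : E} (h : w ∈ hull ℝ {u, v}) (hw : w ∉ hull ℝ {u}) :
    ∃ s t : ℝ, 0 ≤ s ∧ 0 < t ∧ s • u + t • v = w := by
  obtain ⟨s, t, hs, ht, rfl⟩ := mem_hull_pair_iff.mp h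
  rcases ht.eq_or_lt with rfl | ht
  · exact absurd (mem_hull_singleton_iff.mpr ⟨s, hs, by simp⟩) hw
  · exact ⟨s, t, hs, ht, rfl⟩

lemma false_of_three_rays {u₁ u₂ u₃ z₁ z₂ z₃ : E}
    (hu₁₂ : u₁ ∉ hull ℝ {u₂}) (hu₁₃ : u₁ ∉ hull ℝ {u₃}) (hu₂₁ : u₂ ∉ hull ℝ {u₁})
    (hu₂₃ : u₂ ∉ hull ℝ {u₃}) (hu₃₁ : u₃ ∉ hull ℝ {u₁}) (hu₃₂ : u₃ ∉ hull ℝ {u₂})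
    (hz₁₂ : u₂ ∈ hull ℝ {u₁, z₁}) (hz₁₃ : u₃ ∈ hull ℝ {u₁, z₁})
    (hz₂₁ : u₁ ∈ hull ℝ {u₂, z₂}) (hz₂₃ : u₃ ∈ hull ℝ {u₂, z₂})
    (hz₃₁ : u₁ ∈ hull ℝ {u₃, z₃}) (hz₃₂ : u₂ ∈ hull ℝ {u₃, z₃}) : False := by
  obtain ⟨a₁₂, b₁₂, -, hb₁₂, h₁₂⟩ := exists_pos_of_mem_hull_pair hz₁₂ hu₂₁
  obtain ⟨a₁₃, b₁₃, -, hb₁₃, h₁₃⟩ := exists_pos_of_mem_hull_pair hz₁₃ hu₃₁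
  by_cases hdeg : ∃ γ : ℝ, γ • u₁ = z₁
  · -- all three vectors lie on the line through `u₁`, so two of them point the same way
    obtain ⟨γ, rfl⟩ := hdeg
    have hneg : ∀ {u : E}, u ∉ hull ℝ {u₁} → ∀ μ : ℝ, μ • u₁ = u → μ < 0 := fun hu μ hμ =>
      not_le.mp fun h => hu (mem_hull_singleton_iff.mpr ⟨μ, h, hμ⟩)
    have h₂ : (a₁₂ + b₁₂ * γ) • u₁ = u₂ := by rw [← h₁₂]; module
    have h₃ : (a₁₃ + b₁₃ * γ) • u₁ = u₃ := by rw [← h₁₃]; module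
    have hμ₂ := hneg hu₂₁ _ h₂
    refine hu₃₂ (mem_hull_singleton_iff.mpr ⟨(a₁₃ + b₁₃ * γ) / (a₁₂ + b₁₂ * γ),
      div_nonneg_of_nonpos (hneg hu₃₁ _ h₃).le hμ₂.le, ?_⟩)
    rw [← h₂, ← h₃, smul_smul, div_mul_cancel₀ _ hμ₂.ne]
  · -- eliminating `z₂` and `z₃` and reading coefficients in the basis `u₁, z₁` forces
    -- `a₁₃ * b₁₂ - b₁₃ * a₁₂` to be both positive and negative
    push Not at hdeg
    have hu₁ : u₁ ≠ 0 := fun h => hu₁₂ (h ▸ zero_mem _)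
    have hind := LinearIndependent.pair_iff.mp ((LinearIndependent.pair_iff' hu₁).mpr hdeg)
    obtain ⟨a₂₁, b₂₁, -, hb₂₁, h₂₁⟩ := exists_pos_of_mem_hull_pair hz₂₁ hu₁₂
    obtain ⟨a₂₃, b₂₃, -, hb₂₃, h₂₃⟩ := exists_pos_of_mem_hull_pair hz₂₃ hu₃₂
    obtain ⟨a₃₁, b₃₁, -, hb₃₁, h₃₁⟩ := exists_pos_of_mem_hull_pair hz₃₁ hu₁₃
    obtain ⟨a₃₂, b₃₂, -, hb₃₂, h₃₂⟩ := exists_pos_of_mem_hull_pair hz₃₂ hu₂₃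
    set m₂ := b₂₃ * a₂₁ - b₂₁ * a₂₃
    set m₃ := b₃₁ * a₃₂ - b₃₂ * a₃₁
    obtain ⟨hA, hB⟩ := hind (b₂₃ - b₂₁ * a₁₃ - m₂ * a₁₂) (-(b₂₁ * b₁₃ + m₂ * b₁₂)) (by
      linear_combination (norm := module) b₂₁ • h₂₃ - b₂₃ • h₂₁ - m₂ • h₁₂ - b₂₁ • h₁₃)
    obtain ⟨hC, hD⟩ := hind (b₃₁ * a₁₂ - b₃₂ - m₃ * a₁₃) (-(m₃ * b₁₃ - b₃₁ * b₁₂)) (by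
      linear_combination (norm := module) b₃₂ • h₃₁ - b₃₁ • h₃₂ - m₃ • h₁₃ + b₃₁ • h₁₂)
    have hX : b₂₁ * (a₁₃ * b₁₂ - b₁₃ * a₁₂) = b₂₃ * b₁₂ := by
      linear_combination (-b₁₂) * hA + a₁₂ * hB
    have hY : b₃₁ * (a₁₂ * b₁₃ - b₁₂ * a₁₃) = b₃₂ * b₁₃ := by
      linear_combination b₁₃ * hC - a₁₃ * hD
    nlinarith [mul_pos hb₂₃ hb₁₂, mul_pos hb₃₂ hb₁₃]

lemma card_le_two_of_mem_hull_pair {ι : Type*} (s : Finset ι) (u z : ι → E)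
    (hu : ∀ i ∈ s, ∀ j ∈ s, i ≠ j → u i ∉ hull ℝ {u j})
    (hz : ∀ i ∈ s, ∀ j ∈ s, u j ∈ hull ℝ {u i, z i}) : #s ≤ 2 := by
  by_contra! h
  obtain ⟨a, ha, b, hb, c, hc, hab, hac, hbc⟩ := two_lt_card.mp h
  exact false_of_three_rays (hu a ha b hb hab) (hu a ha c hc hac) (hu b hb a ha hab.symm)
    (hu b hb c hc hbc) (hu c hc a ha hac.symm) (hu c hc b hb hbc.symm) (hz a ha b hb)
    (hz a ha c hc) (hz b hb a ha) (hz b hb c hc) (hz c hc a ha) (hz c hc b hb)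

lemma map_mkQ_inf {C D : PointedCone ℝ E} {w : E} (hC : w ∈ C) (hD : w ∈ D) :
    (C ⊓ D).map (span ℝ {w}).mkQ = C.map (span ℝ {w}).mkQ ⊓ D.map (span ℝ {w}).mkQ := by
  refine le_antisymm (Submodule.map_inf_le _) ?_
  rintro _ ⟨⟨y, hy, rfl⟩, ⟨y', hy', hyy'⟩⟩
  obtain ⟨r, hr⟩ : ∃ r : ℝ, r • w = y' - y := mem_span_singleton.mp <| by
    rw [← Submodule.Quotient.mk_eq_zero, Submodule.Quotient.mk_sub]
    exact sub_eq_zero.mpr hyy'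
  rcases le_total 0 r with hr0 | hr0
  · refine ⟨y', ⟨?_, hy'⟩, hyy'⟩
    rw [← sub_add_cancel y' y, ← hr, add_comm]
    exact C.add_mem hy (C.smul_mem hr0 hC)
  · refine ⟨y, ⟨hy, ?_⟩, rfl⟩
    have : y = y' + (-r) • w := by rw [neg_smul, hr]; abel
    rw [this]
    exact D.add_mem hy' (D.smul_mem (neg_nonneg.mpr hr0) hD)

end PointedCone

lemma finrank_map_mkQ_span_singleton (S : Submodule ℝ E) [FiniteDimensional ℝ S] {w : E}
    (hw : w ∈ S) (hw0 : w ≠ 0) : finrank ℝ (S.map (span ℝ {w}).mkQ) = finrank ℝ S - 1 := by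
  set φ := (span ℝ {w}).mkQ.domRestrict S
  have hker : LinearMap.ker φ = (span ℝ {w}).comap S.subtype := by
    ext y
    simp [φ, Submodule.Quotient.mk_eq_zero]
  have hle : span ℝ {w} ≤ S := (span_singleton_le_iff_mem w S).mpr hw
  have h := LinearMap.finrank_range_add_finrank_ker φ
  rw [LinearMap.range_domRestrict, hker, (comapSubtypeEquivOfLe hle).finrank_eq,
    finrank_span_singleton hw0] at h
  omega

variable {V : Type*} {g : V → E} {σ τ : Finset V}

lemma linearIndependent_mkQ_erase [DecidableEq V] (hσ : LinearIndependent ℝ fun v : σ => g v)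
    {x : V} (hx : x ∈ σ) :
    LinearIndependent ℝ fun v : σ.erase x => (span ℝ {g x}).mkQ (g v) := by
  have hσ' : LinearIndepOn ℝ g (σ : Set V) := hσ
  have hx' : LinearIndepOn ℝ g {x} := hσ'.mono (by simpa using hx)
  have h := (hx'.quotient_iff_union (t := ((σ.erase x : Finset V) : Set V)) (by simp)).mpr
    (by rwa [Set.singleton_union, ← coe_insert, insert_erase hx])
  rw [Set.image_singleton] at h
  exact h

def facetCone (g : V → E) (σ : Finset V) : PointedCone ℝ E :=
  PointedCone.hull ℝ (g '' σ)

lemma mem_facetCone_of_mem {v : V} (hv : v ∈ σ) : g v ∈ facetCone g σ :=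
  PointedCone.subset_hull ⟨v, hv, rfl⟩

lemma span_facetCone (g : V → E) (σ : Finset V) :
    span ℝ (facetCone g σ : Set E) = span ℝ (g '' σ) :=
  span_span_of_tower _ _ _

instance (g : V → E) (σ τ : Finset V) :
    FiniteDimensional ℝ (span ℝ (↑(facetCone g σ ⊓ facetCone g τ) : Set E)) :=
  haveI : FiniteDimensional ℝ (span ℝ (g '' σ)) :=
    FiniteDimensional.span_of_finite ℝ (σ.finite_toSet.image g)
  Submodule.finiteDimensional_of_le
    ((span_mono inf_le_left).trans (span_facetCone g σ).le)

lemma map_facetCone (π : E →ₗ[ℝ] W) (g : V → E) (σ : Finset V) :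
    (facetCone g σ).map π = facetCone (π ∘ g) σ := by
  rw [facetCone, facetCone, Set.image_comp]
  exact Submodule.map_span _ _

lemma facetCone_pair [DecidableEq V] (a b : V) :
    facetCone g {a, b} = PointedCone.hull ℝ {g a, g b} := by
  rw [facetCone, coe_pair, Set.image_pair]

lemma facetCone_erase_of_eq_zero [DecidableEq V] {x : V} (hx : x ∈ σ) (h0 : g x = 0) :
    facetCone g (σ.erase x) = facetCone g σ := by
  conv_rhs => rw [facetCone, ← insert_erase hx, coe_insert, Set.image_insert_eq, h0]
  exact span_insert_zero.symm

/-- For `k ≥ 2` the dimension condition already forces two facet cones to meet outside `0`;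
this is what nonemptiness of the intersections of the facets becomes. -/
structure IsConeThrackle (k : ℕ) (F : Finset (Finset V)) (g : V → E) : Prop where
  card_eq : ∀ σ ∈ F, #σ = k
  linearIndependent : ∀ σ ∈ F, LinearIndependent ℝ fun v : σ => g v
  finrank_span_inf : ∀ σ ∈ F, ∀ τ ∈ F, σ ≠ τ →
    finrank ℝ (span ℝ (↑(facetCone g σ ⊓ facetCone g τ) : Set E)) = k - 1

namespace IsConeThrackle

variable {k : ℕ} {F : Finset (Finset V)}

lemma mono {F' : Finset (Finset V)} (h : IsConeThrackle k F g) (hF : F' ⊆ F) :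
    IsConeThrackle k F' g where
  card_eq σ hσ := h.card_eq σ (hF hσ)
  linearIndependent σ hσ := h.linearIndependent σ (hF hσ)
  finrank_span_inf σ hσ τ hτ := h.finrank_span_inf σ (hF hσ) τ (hF hτ)

lemma ne_zero (h : IsConeThrackle k F g) (hσ : σ ∈ F) {v : V} (hv : v ∈ σ) : g v ≠ 0 :=
  (h.linearIndependent σ hσ).ne_zero ⟨v, hv⟩

lemma inf_eq_bot (h : IsConeThrackle 1 F g) (hσ : σ ∈ F) (hτ : τ ∈ F) (hne : σ ≠ τ) :
    facetCone g σ ⊓ facetCone g τ = ⊥ := by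
  have hspan := Submodule.finrank_eq_zero.mp (h.finrank_span_inf σ hσ τ hτ hne)
  refine eq_bot_iff.mpr fun y hy => ?_
  have : y ∈ span ℝ (↑(facetCone g σ ⊓ facetCone g τ) : Set E) := subset_span hy
  rwa [hspan, mem_bot] at this

lemma subset_span_singleton (h : IsConeThrackle 2 F g) (hσ : σ ∈ F) (hτ : τ ∈ F)
    (hne : σ ≠ τ) {w : E} (hw : w ∈ facetCone g σ ⊓ facetCone g τ) (hw0 : w ≠ 0) :
    (↑(facetCone g σ ⊓ facetCone g τ) : Set E) ⊆ span ℝ {w} := by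
  have hle : span ℝ {w} ≤ span ℝ (↑(facetCone g σ ⊓ facetCone g τ) : Set E) :=
    span_mono (Set.singleton_subset_iff.mpr hw)
  rw [eq_of_le_of_finrank_le hle (by rw [h.finrank_span_inf σ hσ τ hτ hne,
    finrank_span_singleton hw0])]
  exact subset_span

lemma exists_ne_zero_mem_inf (h : IsConeThrackle 2 F g) (hσ : σ ∈ F) (hτ : τ ∈ F)
    (hne : σ ≠ τ) : ∃ y ∈ facetCone g σ ⊓ facetCone g τ, y ≠ 0 := by
  by_contra! hy
  have := h.finrank_span_inf σ hσ τ hτ hne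
  rw [span_eq_bot.mpr hy, finrank_bot] at this
  omega

variable [DecidableEq V]

lemma facetCone_mkQ_erase {x : V} (hx : x ∈ σ) :
    facetCone ((span ℝ {g x}).mkQ ∘ g) (σ.erase x) = (facetCone g σ).map (span ℝ {g x}).mkQ := by
  rw [map_facetCone, facetCone_erase_of_eq_zero hx]
  simp [mem_span_singleton_self]

protected lemma link (h : IsConeThrackle (k + 1) F g) (x : V) :
    IsConeThrackle k (link F x) ((span ℝ {g x}).mkQ ∘ g) where
  card_eq σ' hσ' := by
    obtain ⟨σ, hσ, hxσ, rfl⟩ := mem_link.mp hσ'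
    rw [card_erase_of_mem hxσ, h.card_eq σ hσ, Nat.add_sub_cancel]
  linearIndependent σ' hσ' := by
    obtain ⟨σ, hσ, hxσ, rfl⟩ := mem_link.mp hσ'
    exact linearIndependent_mkQ_erase (h.linearIndependent σ hσ) hxσ
  finrank_span_inf σ' hσ' τ' hτ' hne := by
    obtain ⟨σ, hσ, hxσ, rfl⟩ := mem_link.mp hσ'
    obtain ⟨τ, hτ, hxτ, rfl⟩ := mem_link.mp hτ'
    have hgx : g x ∈ facetCone g σ ⊓ facetCone g τ :=
      ⟨mem_facetCone_of_mem hxσ, mem_facetCone_of_mem hxτ⟩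
    rw [facetCone_mkQ_erase hxσ, facetCone_mkQ_erase hxτ,
      ← PointedCone.map_mkQ_inf hgx.1 hgx.2, PointedCone.coe_map, span_image,
      finrank_map_mkQ_span_singleton _ (subset_span hgx) (h.ne_zero hσ hxσ),
      h.finrank_span_inf σ hσ τ hτ (fun h => hne (by rw [h])), Nat.add_sub_cancel]

lemma mkQ_notMem_hull_singleton (h : IsConeThrackle 2 F g) {x a a' : V}
    (hσ : {x, a} ∈ F) (hσ' : {x, a'} ∈ F) (hxa : x ≠ a) (hxa' : x ≠ a') (haa' : a ≠ a') :
    (span ℝ {g x}).mkQ (g a) ∉ PointedCone.hull ℝ {(span ℝ {g x}).mkQ (g a')} := by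
  have hlink : ∀ {b}, x ≠ b → {x, b} ∈ F → {b} ∈ link F x := fun hxb hb =>
    mem_link.mpr ⟨_, hb, mem_insert_self x _, erase_insert (notMem_singleton.mpr hxb)⟩
  intro hmem
  have hbot := (h.link x).inf_eq_bot (hlink hxa hσ) (hlink hxa' hσ') (by simpa using haa')
  simp only [facetCone, coe_singleton, Set.image_singleton, Function.comp_apply] at hbot
  have hzero := hbot ▸ mem_inf.mpr ⟨PointedCone.subset_hull (Set.mem_singleton _), hmem⟩
  exact (h.link x).ne_zero (hlink hxa hσ) (mem_singleton_self a) hzero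

lemma mkQ_mem_hull_pair (h : IsConeThrackle 2 F g) {x a a' b : V} (hσ : {x, a} ∈ F)
    (hσ' : {x, a'} ∈ F) (hτ : {a, b} ∈ F) (hxa : x ≠ a) (hxb : x ≠ b) :
    (span ℝ {g x}).mkQ (g a') ∈
      PointedCone.hull ℝ {(span ℝ {g x}).mkQ (g a), (span ℝ {g x}).mkQ (g b)} := by
  set π := (span ℝ {g x}).mkQ
  have hxτ : x ∉ ({a, b} : Finset V) := by simp [hxa, hxb]
  have hτσ : ∀ {c}, ({a, b} : Finset V) ≠ {x, c} := fun h => hxτ (h ▸ mem_insert_self x _)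
  obtain ⟨y, ⟨hyτ, hyσ'⟩, hy0⟩ := h.exists_ne_zero_mem_inf hτ hσ' hτσ
  rw [SetLike.mem_coe, facetCone_pair] at hyσ'
  obtain ⟨s, t, hs, ht, rfl⟩ := PointedCone.mem_hull_pair_iff.mp hyσ'
  rcases ht.eq_or_lt with rfl | ht
  · -- `y` lies on the ray of `g x`, so `g x` and `g a` would both lie in the ray where the
    -- cones of `xa` and `ab` meet
    have hgx : g x ∈ facetCone g {a, b} := by
      have hs0 : s ≠ 0 := by rintro rfl; simp at hy0
      simpa [smul_smul, hs0] using (facetCone g {a, b}).smul_mem (inv_nonneg.mpr hs) hyτ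
    have hga : g a ∈ facetCone g {x, a} ⊓ facetCone g {a, b} :=
      ⟨mem_facetCone_of_mem (by simp), mem_facetCone_of_mem (by simp)⟩
    have hspan := h.subset_span_singleton hσ hτ hτσ.symm hga (h.ne_zero hσ (by simp))
      ⟨mem_facetCone_of_mem (by simp), hgx⟩
    have hind : LinearIndepOn ℝ g (insert x {a}) := by
      rw [← coe_singleton, ← coe_insert]
      exact h.linearIndependent _ hσ
    exact absurd (by simpa using hspan) (hind.notMem_span_of_insert (by simpa using hxa))
  · have hπy : π (s • g x + t • g a') = t • π (g a') := by
      simp [π, mem_span_singleton_self]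
    have hmem := PointedCone.mem_map.mpr ⟨_, hyτ, hπy⟩
    rw [map_facetCone, facetCone_pair] at hmem
    simpa [smul_smul, ht.ne'] using (PointedCone.hull ℝ _).smul_mem (inv_nonneg.mpr ht.le) hmem

lemma card_filter_mem_le_two (h : IsConeThrackle 2 F g)
    (hF : ∀ σ ∈ F, ∀ v ∈ σ, ∃ τ ∈ F, v ∈ τ ∧ τ ≠ σ) (x : V) : #{σ ∈ F | x ∈ σ} ≤ 2 := by
  have hpage : ∀ σ ∈ {σ ∈ F | x ∈ σ}, ∃ a, x ≠ a ∧ σ = {x, a} ∧ ∃ b, x ≠ b ∧ {a, b} ∈ F := by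
    intro σ hσ
    obtain ⟨hσF, hxσ⟩ := mem_filter.mp hσ
    obtain ⟨a, hxa, rfl⟩ := exists_eq_pair_of_card_eq_two (h.card_eq _ hσF) hxσ
    obtain ⟨τ, hτ, haτ, hτσ⟩ := hF _ hσF a (by simp)
    obtain ⟨b, -, rfl⟩ := exists_eq_pair_of_card_eq_two (h.card_eq τ hτ) haτ
    exact ⟨a, hxa, rfl, b, fun hxb => hτσ (by rw [← hxb, pair_comm]), hτ⟩
  have : Nonempty V := ⟨x⟩
  choose! a hxa hσa b hxb hab using hpage
  have hmem : ∀ σ ∈ {σ ∈ F | x ∈ σ}, {x, a σ} ∈ F := fun σ hσ => hσa σ hσ ▸ (mem_filter.mp hσ).1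
  refine PointedCone.card_le_two_of_mem_hull_pair _ (fun σ => (span ℝ {g x}).mkQ (g (a σ)))
    (fun σ => (span ℝ {g x}).mkQ (g (b σ))) (fun σ hσ σ' hσ' hne => ?_)
    (fun σ hσ σ' hσ' => h.mkQ_mem_hull_pair (hmem σ hσ) (hmem σ' hσ') (hab σ hσ) (hxa σ hσ)
      (hxb σ hσ))
  exact h.mkQ_notMem_hull_singleton (hmem σ hσ) (hmem σ' hσ') (hxa σ hσ) (hxa σ' hσ')
    fun heq => hne (by rw [hσa σ hσ, hσa σ' hσ', heq])

theorem card_le_card_faces_one (h : IsConeThrackle 2 F g) : #F ≤ #(faces F 1) := by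
  induction F using Finset.strongInduction with
  | H F ih =>
    by_cases hpriv : ∃ σ ∈ F, ∃ v ∈ σ, ∀ τ ∈ F, v ∈ τ → τ = σ
    · obtain ⟨σ, hσ, v, hv, hpriv⟩ := hpriv
      have hle := ih _ (erase_ssubset hσ) (h.mono (erase_subset σ F))
      have hlt := card_faces_erase_lt hσ (singleton_subset_iff.mpr hv)
        fun τ hτ hvτ => hpriv τ hτ (singleton_subset_iff.mp hvτ)
      rw [card_singleton] at hlt
      have := card_erase_add_one hσ
      omega
    · push Not at hpriv
      exact card_le_card_faces_one_of_card_filter_mem_le_two h.card_eq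
        (h.card_filter_mem_le_two hpriv)

theorem card_mul_le (h : IsConeThrackle k F g) (hk : 2 ≤ k) : k * #F ≤ 2 * #(faces F (k - 1)) := by
  induction k, hk using Nat.le_induction generalizing E F g with
  | base => simpa using h.card_le_card_faces_one
  | succ k hk ih =>
    have hlink : k * ∑ x ∈ F.biUnion id, #(link F x) ≤
        2 * ∑ x ∈ F.biUnion id, #(faces (link F x) (k - 1)) := by
      simp_rw [mul_sum]
      exact sum_le_sum fun x _ => ih (h.link x)
    rw [sum_card_link h.card_eq, sum_card_faces_link, Nat.sub_add_cancel (by omega),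
      mul_left_comm 2] at hlink
    simpa using Nat.le_of_mul_le_mul_left hlink (by omega)

end IsConeThrackle

end Cones

section Homogenization

def homogenize {P : Type*} (q : P) : ℝ × P := (1, q)

@[simp] lemma homogenize_fst {P : Type*} (q : P) : (homogenize q).1 = 1 := rfl

@[simp] lemma homogenize_snd {P : Type*} (q : P) : (homogenize q).2 = q := rfl

variable {P : Type*} [AddCommGroup P] [Module ℝ P]

lemma smul_homogenize (t : ℝ) (q : P) : t • homogenize q = (t, t • q) := by
  simp [homogenize]

lemma linearIndependent_homogenize {ι : Type*} {p : ι → P} (hp : AffineIndependent ℝ p) :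
    LinearIndependent ℝ (homogenize ∘ p) := by
  refine linearIndependent_iff'.mpr fun s c hc i hi => ?_
  have h₁ := congrArg Prod.fst hc
  have h₂ := congrArg Prod.snd hc
  simp only [Prod.fst_sum, Prod.snd_sum, Prod.smul_fst, Prod.smul_snd, Function.comp_apply,
    homogenize_fst, homogenize_snd, smul_eq_mul, mul_one, Prod.fst_zero, Prod.snd_zero] at h₁ h₂
  exact hp.eq_zero_of_sum_eq_zero h₁ h₂ i hi

lemma homogenize_mem_hull {S : Set P} {q : P} (hq : q ∈ convexHull ℝ S) :
    homogenize q ∈ PointedCone.hull ℝ (homogenize '' S) := by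
  refine convexHull_min (t := {q | homogenize q ∈ PointedCone.hull ℝ (homogenize '' S)})
    (fun q hq => PointedCone.subset_hull ⟨q, hq, rfl⟩) ?_ hq
  intro q₁ hq₁ q₂ hq₂ a b ha hb hab
  have h := (PointedCone.hull ℝ (homogenize '' S)).convex hq₁ hq₂ ha hb hab
  simpa [homogenize, hab] using h

lemma eq_zero_or_eq_smul_homogenize_of_mem_hull {S : Set P} {y : ℝ × P}
    (hy : y ∈ PointedCone.hull ℝ (homogenize '' S)) :
    y = 0 ∨ ∃ t : ℝ, 0 < t ∧ ∃ q ∈ convexHull ℝ S, y = t • homogenize q := by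
  induction hy using Submodule.span_induction with
  | mem y hy =>
    obtain ⟨q, hq, rfl⟩ := hy
    exact .inr ⟨1, one_pos, q, subset_convexHull ℝ S hq, (one_smul _ _).symm⟩
  | zero => exact .inl rfl
  | add y y' _ _ h h' =>
    rcases h with rfl | ⟨t, ht, q, hq, rfl⟩
    · simpa using h'
    rcases h' with rfl | ⟨t', ht', q', hq', rfl⟩
    · simpa using Or.inr ⟨t, ht, q, hq, rfl⟩
    have hsum : 0 < t + t' := add_pos ht ht'
    refine .inr ⟨t + t', hsum, (t / (t + t')) • q + (t' / (t + t')) • q',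
      convex_convexHull ℝ S hq hq' (by positivity) (by positivity) (by field_simp), ?_⟩
    simp only [smul_homogenize, Prod.mk_add_mk, smul_add, smul_smul]
    congr 1
    rw [mul_div_cancel₀ _ hsum.ne', mul_div_cancel₀ _ hsum.ne']
  | smul a y _ h =>
    rcases h with rfl | ⟨t, ht, q, hq, rfl⟩
    · exact .inl (smul_zero a)
    rw [← Nonneg.coe_smul, smul_smul]
    rcases eq_or_lt_of_le a.2 with ha | ha
    · exact .inl (by rw [← ha, zero_mul, zero_smul])
    exact .inr ⟨a * t, mul_pos ha ht, q, hq, rfl⟩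

lemma span_hull_homogenize_inf (S T : Set P) :
    span ℝ (↑(PointedCone.hull ℝ (homogenize '' S) ⊓ PointedCone.hull ℝ (homogenize '' T)) :
      Set (ℝ × P)) = span ℝ (homogenize '' (convexHull ℝ S ∩ convexHull ℝ T)) := by
  refine le_antisymm (span_le.mpr ?_) (span_mono ?_)
  · rintro y ⟨hyS, hyT⟩
    rcases eq_zero_or_eq_smul_homogenize_of_mem_hull hyS with rfl | ⟨t, ht, q, hq, rfl⟩
    · exact zero_mem _
    rcases eq_zero_or_eq_smul_homogenize_of_mem_hull hyT with h0 | ⟨t', -, q', hq', h⟩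
    · exact absurd (congrArg Prod.fst h0) (by simpa using ht.ne')
    simp only [smul_homogenize, Prod.mk.injEq] at h
    obtain ⟨rfl, hqq'⟩ := h
    obtain rfl := smul_right_injective P ht.ne' hqq'
    exact smul_mem _ _ (subset_span ⟨q, ⟨hq, hq'⟩, rfl⟩)
  · rintro _ ⟨q, ⟨hqS, hqT⟩, rfl⟩
    exact ⟨homogenize_mem_hull hqS, homogenize_mem_hull hqT⟩

lemma span_homogenize_eq_sup {A : Set P} {q₀ : P} (hq₀ : q₀ ∈ A) :
    span ℝ (homogenize '' A) =
      span ℝ {homogenize q₀} ⊔ (vectorSpan ℝ A).map (LinearMap.inr ℝ ℝ P) := by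
  refine le_antisymm (span_le.mpr ?_) (sup_le ?_ ?_)
  · rintro _ ⟨q, hq, rfl⟩
    have : homogenize q = homogenize q₀ + LinearMap.inr ℝ ℝ P (q -ᵥ q₀) := by
      simp [homogenize]
    rw [this]
    exact add_mem (mem_sup_left (mem_span_singleton_self _))
      (mem_sup_right (mem_map_of_mem (vsub_mem_vectorSpan ℝ hq hq₀)))
  · exact span_le.mpr (Set.singleton_subset_iff.mpr (subset_span ⟨q₀, hq₀, rfl⟩))
  · rw [vectorSpan_def, map_span, span_le]
    rintro _ ⟨_, ⟨q, hq, q', hq', rfl⟩, rfl⟩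
    have : LinearMap.inr ℝ ℝ P (q -ᵥ q') = homogenize q - homogenize q' := by
      simp [homogenize]
    rw [this]
    exact sub_mem (subset_span ⟨q, hq, rfl⟩) (subset_span ⟨q', hq', rfl⟩)

lemma finrank_span_homogenize [FiniteDimensional ℝ P] {A : Set P} (hA : A.Nonempty) :
    finrank ℝ (span ℝ (homogenize '' A)) = finrank ℝ (affineSpan ℝ A).direction + 1 := by
  obtain ⟨q₀, hq₀⟩ := hA
  have hdisj : span ℝ {homogenize q₀} ⊓ (vectorSpan ℝ A).map (LinearMap.inr ℝ ℝ P) = ⊥ := by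
    refine eq_bot_iff.mpr fun y ⟨hy₁, hy₂⟩ => ?_
    obtain ⟨r, rfl⟩ := mem_span_singleton.mp hy₁
    obtain ⟨v, -, hv⟩ := mem_map.mp hy₂
    have : r = 0 := by simpa [homogenize] using (congrArg Prod.fst hv).symm
    simp [this]
  have h := finrank_sup_add_finrank_inf_eq (span ℝ {homogenize q₀})
    ((vectorSpan ℝ A).map (LinearMap.inr ℝ ℝ P))
  rw [hdisj, finrank_bot, add_zero, finrank_span_singleton (by simp [homogenize, Prod.ext_iff]),
    ← (equivMapOfInjective _ LinearMap.inr_injective _).finrank_eq] at h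
  rw [span_homogenize_eq_sup hq₀, h, direction_affineSpan, add_comm]

end Homogenization

theorem isConeThrackle_homogenize {V P : Type*} [AddCommGroup P] [Module ℝ P]
    [FiniteDimensional ℝ P] {k : ℕ} (hk : 2 ≤ k) {F : Finset (Finset V)} {f : V → P}
    (hF : ∀ σ ∈ F, #σ = k) (hemb : ∀ σ ∈ F, AffineIndependent ℝ fun v : σ => f v)
    (hint : ∀ σ ∈ F, ∀ τ ∈ F, σ ≠ τ →
      (convexHull ℝ (f '' σ) ∩ convexHull ℝ (f '' τ)).Nonempty ∧
      finrank ℝ (affineSpan ℝ (convexHull ℝ (f '' σ) ∩ convexHull ℝ (f '' τ))).direction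
        = k - 2) :
    IsConeThrackle k F (homogenize ∘ f) where
  card_eq := hF
  linearIndependent σ hσ := linearIndependent_homogenize (hemb σ hσ)
  finrank_span_inf σ hσ τ hτ hne := by
    obtain ⟨hnonempty, hrank⟩ := hint σ hσ τ hτ hne
    rw [facetCone, facetCone, Set.image_comp, Set.image_comp, span_hull_homogenize_inf,
      finrank_span_homogenize hnonempty, hrank]
    omega

theorem linear_thrackle_highdim_general (d : ℕ) (hd : 2 ≤ d)
    {V : Type*} [DecidableEq V]
    (F : Finset (Finset V)) (hF : ∀ σ ∈ F, σ.card = d)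
    (f : V → EuclideanSpace ℝ (Fin d))
    (hemb : ∀ σ ∈ F, AffineIndependent ℝ (fun v : σ => f v))
    (hint : ∀ σ ∈ F, ∀ τ ∈ F, σ ≠ τ →
      (convexHull ℝ (f '' σ) ∩ convexHull ℝ (f '' τ)).Nonempty ∧
      Module.finrank ℝ
        (affineSpan ℝ (convexHull ℝ (f '' σ) ∩ convexHull ℝ (f '' τ))).direction
        = d - 2) :
    d * F.card ≤
      2 * {ρ : Finset V | ρ.card = d - 1 ∧ ∃ σ ∈ F, ρ ⊆ σ}.ncard := by
  have h := (isConeThrackle_homogenize hd hF hemb hint).card_mul_le hd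
  rwa [← coe_faces, Set.ncard_coe_finset]

/-- A linear `(d-1)`-thrackle with `m` facets and `n` ridges satisfies `d·m ≤ 2·n`:
if `F` is a family of `d`-element facets on a finite vertex set `V` and
`f : V → ℝ^d` maps each facet to an affinely independent set, with the convex hulls
of any two distinct facets intersecting in a nonempty set of affine dimension exactly
`d - 2`, then `d·|F| ≤ 2·n` where `n` counts the `(d-1)`-element subsets of facets. -/
theorem linear_thrackle_highdim (d : ℕ) (hd : 2 ≤ d)
    {V : Type*} [Fintype V] [DecidableEq V]
    (F : Finset (Finset V)) (hF : ∀ σ ∈ F, σ.card = d)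
    (f : V → EuclideanSpace ℝ (Fin d))
    (hemb : ∀ σ ∈ F, AffineIndependent ℝ (fun v : σ => f v))
    (hint : ∀ σ ∈ F, ∀ τ ∈ F, σ ≠ τ →
      (convexHull ℝ (f '' σ) ∩ convexHull ℝ (f '' τ)).Nonempty ∧
      Module.finrank ℝ
        (affineSpan ℝ (convexHull ℝ (f '' σ) ∩ convexHull ℝ (f '' τ))).direction
        = d - 2) :
    d * F.card ≤
      2 * {ρ : Finset V | ρ.card = d - 1 ∧ ∃ σ ∈ F, ρ ⊆ σ}.ncard :=
  linear_thrackle_highdim_general d hd F hF f hemb hint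
end

section
/- Let d ≥ 2 and let p_0, p_1, …, p_d ∈ ℝ^d be affinely independent points. Then for any two distinct d-element subsets σ, τ ⊆ {0,1,…,d}: conv{p_i : i ∈ σ} ∩ conv{p_i : i ∈ τ} = conv{p_i : i ∈ σ ∩ τ}, and this intersection is nonempty with affine span of dimension exactly d − 2. Consequently the boundary of the d-simplex, realized linearly in ℝ^d with its m = d + 1 facets and n = d(d+1)/2 ridges, is a linear (d−1)-thrackle attaining equality d·m = 2·n. -/
/-!
Affine independence of all `d + 1` vertices makes any two faces of the simplex meet exactly in
their common face (a point of both hulls has unique barycentric coordinates, supported on both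
index sets). Two distinct facets share `d - 1` vertices, so they meet in a nonempty face of
dimension `d - 2`. Every `(d - 1)`-subset of the vertices lies in a facet, so there are
`(d + 1).choose (d - 1) = d(d + 1)/2` ridges.
-/

open Finset Module

section ConvexHull

variable {ι 𝕜 E : Type*} [Field 𝕜] [LinearOrder 𝕜] [AddCommGroup E] [Module 𝕜 E] {p : ι → E}

theorem AffineIndependent.convexHull_image_inter [IsStrictOrderedRing 𝕜] [DecidableEq ι]
    (hp : AffineIndependent 𝕜 p) (s t : Finset ι) :
    convexHull 𝕜 (p '' s) ∩ convexHull 𝕜 (p '' t) = convexHull 𝕜 (p '' ↑(s ∩ t)) := by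
  classical
  have hunion : AffineIndependent 𝕜 ((↑) : ↑(s.image p ∪ t.image p) → E) :=
    hp.range.mono (by simp)
  rw [coe_inter, Set.image_inter hp.injective]
  simpa using hunion.convexHull_inter'.symm

theorem AffineIndependent.finrank_direction_affineSpan_convexHull_image
    (hp : AffineIndependent 𝕜 p) {s : Finset ι} {n : ℕ} (hs : #s = n + 1) :
    finrank 𝕜 (affineSpan 𝕜 (convexHull 𝕜 (p '' s))).direction = n := by
  classical
  rw [affineSpan_convexHull, direction_affineSpan, ← coe_image]
  exact hp.finrank_vectorSpan_image_finset hs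

end ConvexHull

namespace Finset

variable {α : Type*} [Fintype α]

theorem card_inter_add_one_of_ne_of_card_add_one_eq [DecidableEq α] {s t : Finset α}
    (hs : #s + 1 = Fintype.card α) (ht : #t = #s) (hst : s ≠ t) : #(s ∩ t) + 1 = #s := by
  have hinter : #(s ∩ t) < #s :=
    card_lt_card (inf_lt_left.2 fun h ↦ hst (eq_of_subset_of_card_le h ht.le))
  have hunion : #(s ∪ t) ≤ Fintype.card α := card_le_univ _
  have := card_inter_add_card_union s t
  omega

theorem setOf_card_eq_and_exists_superset_card_eq {j k : ℕ} (hjk : j ≤ k)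
    (hk : k ≤ Fintype.card α) :
    {ρ : Finset α | #ρ = j ∧ ∃ σ : Finset α, #σ = k ∧ ρ ⊆ σ} =
      ((powersetCard j univ : Finset (Finset α)) : Set (Finset α)) := by
  ext ρ
  simp only [Set.mem_ofPred_eq, mem_coe, mem_powersetCard, subset_univ, true_and]
  refine ⟨And.left, fun hρ ↦ ⟨hρ, ?_⟩⟩
  obtain ⟨σ, hρσ, hσ⟩ := exists_superset_card_eq (hρ.trans_le hjk) hk
  exact ⟨σ, hσ, hρσ⟩

end Finset

theorem Nat.add_one_choose_sub_one {d : ℕ} (hd : 1 ≤ d) :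
    (d + 1).choose (d - 1) = d * (d + 1) / 2 := by
  rw [Nat.choose_symm_of_eq_add (by omega : d + 1 = d - 1 + 2), Nat.choose_two_right,
    Nat.add_sub_cancel, Nat.mul_comm]

/-- The boundary of the `d`-simplex, realized linearly in `ℝ^d` by affinely
independent points `p 0, …, p d`, is a linear `(d-1)`-thrackle attaining equality
`d·m = 2·n`: any two distinct `d`-element subsets `σ, τ` of the vertex indices
satisfy `conv (p '' σ) ∩ conv (p '' τ) = conv (p '' (σ ∩ τ))`, a nonempty set whose
affine span has dimension exactly `d - 2`; moreover with `m = d + 1` facets and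
`n = d(d+1)/2` ridges we have `d·m = 2·n`. -/
theorem simplex_boundary_thrackle (d : ℕ) (hd : 2 ≤ d)
    (p : Fin (d + 1) → EuclideanSpace ℝ (Fin d))
    (hp : AffineIndependent ℝ p) :
    (∀ σ τ : Finset (Fin (d + 1)), σ.card = d → τ.card = d → σ ≠ τ →
      (convexHull ℝ (p '' σ) ∩ convexHull ℝ (p '' τ) = convexHull ℝ (p '' ↑(σ ∩ τ))) ∧
      (convexHull ℝ (p '' σ) ∩ convexHull ℝ (p '' τ)).Nonempty ∧
      Module.finrank ℝ
        (affineSpan ℝ (convexHull ℝ (p '' σ) ∩ convexHull ℝ (p '' τ))).direction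
        = d - 2) ∧
    {ρ : Finset (Fin (d + 1)) | ρ.card = d - 1 ∧
        ∃ σ : Finset (Fin (d + 1)), σ.card = d ∧ ρ ⊆ σ}.ncard = d * (d + 1) / 2 ∧
    d * (d + 1) = 2 * (d * (d + 1) / 2) := by
  refine ⟨fun σ τ hσ hτ hστ ↦ ?_, ?_,
    (Nat.two_mul_div_two_of_even (Nat.even_mul_succ_self d)).symm⟩
  · have hcard : #(σ ∩ τ) + 1 = #σ :=
      card_inter_add_one_of_ne_of_card_add_one_eq (by simp [hσ]) (hτ.trans hσ.symm) hστ
    have hnonempty : (σ ∩ τ).Nonempty := card_pos.1 (by omega)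
    rw [hp.convexHull_image_inter]
    exact ⟨rfl, convexHull_nonempty_iff.2 ((coe_nonempty.2 hnonempty).image p),
      hp.finrank_direction_affineSpan_convexHull_image (by omega)⟩
  · rw [setOf_card_eq_and_exists_superset_card_eq (by omega) (by simp), Set.ncard_coe_finset,
      card_powersetCard, card_univ, Fintype.card_fin, Nat.add_one_choose_sub_one (by omega)]
end

section
/- In ℝ³, let e_1, e_2, e_3 be the standard basis vectors, let V = {e_1, −e_1, e_2, −e_2, e_3, −e_3} (so |V| = 6) and W = V ∪ {0} (so |W| = 7). Define the seven sets C_1 = conv{e_1, e_2, e_3}, C_2 = conv{e_1, −e_2, −e_3}, C_3 = conv{−e_1, e_2, −e_3}, C_4 = conv{−e_1, −e_2, e_3}, C_5 = conv{e_1, −e_1}, C_6 = conv{e_2, −e_2}, C_7 = conv{e_3, −e_3}. Then C_1, …, C_7 are pairwise distinct convex hulls of subsets of V and |C_i ∩ C_j ∩ W| = 1 for all i ≠ j, while the number of sets, 7, exceeds |V| = 6. -/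
/-!
Each `Cᵢ` lies in a plane `⟪aᵢ, x⟫ = cᵢ`: for a triangle `aᵢ` is the sign vector of its vertices
and `cᵢ = 1`; for the segment `conv {±eₖ}` it is `∑_{j ≠ k} xⱼ = 0`. The points of `W` on that
plane are exactly the vertices of `Cᵢ`, together with `0 = midpoint (eₖ) (-eₖ)` for a segment, and
all of them lie in `Cᵢ`. So `Cᵢ ∩ W` is an explicit set of vertex indices, and the remaining claims
are finite checks on these index sets.
-/

open Set

theorem convexHull_subset_setOf_eq {𝕜 E : Type*} [Field 𝕜] [LinearOrder 𝕜] [IsStrictOrderedRing 𝕜]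
    [AddCommGroup E] [Module 𝕜 E] (f : E →ₗ[𝕜] 𝕜) {c : 𝕜} {s : Set E} (hs : ∀ x ∈ s, f x = c) :
    convexHull 𝕜 s ⊆ {x | f x = c} :=
  convexHull_min hs (convex_hyperplane f.isLinear c)

theorem zero_mem_convexHull_pair_neg {E : Type*} [AddCommGroup E] [Module ℝ E] (x : E) :
    (0 : E) ∈ convexHull ℝ {x, -x} := by
  rw [convexHull_pair, ← midpoint_self_neg ℝ x]
  exact midpoint_mem_segment x (-x)

namespace OctahedronThrackle

noncomputable def e (i : Fin 3) : EuclideanSpace ℝ (Fin 3) := EuclideanSpace.single i 1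

noncomputable def pt : Fin 7 → EuclideanSpace ℝ (Fin 3) := ![0, e 0, -e 0, e 1, -e 1, e 2, -e 2]

def coords : Fin 7 → Fin 3 → ℤ :=
  ![![0, 0, 0], ![1, 0, 0], ![-1, 0, 0], ![0, 1, 0], ![0, -1, 0], ![0, 0, 1], ![0, 0, -1]]

theorem pt_apply (k : Fin 7) (j : Fin 3) : pt k j = coords k j := by
  fin_cases k <;> fin_cases j <;> simp [pt, e, coords]

theorem pt_injective : Function.Injective pt := by
  have coords_injective : Function.Injective coords := by decide
  intro k l h
  refine coords_injective (funext fun j => ?_)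
  have hj := congrArg (· j) h
  simp only [pt_apply] at hj
  exact_mod_cast hj

theorem image_pt_nonzero :
    pt '' ↑({1, 2, 3, 4, 5, 6} : Finset (Fin 7)) = {e 0, -e 0, e 1, -e 1, e 2, -e 2} := by
  simp [pt, image_insert_eq]

theorem range_pt : range pt = insert 0 (pt '' ↑({1, 2, 3, 4, 5, 6} : Finset (Fin 7))) := by
  rw [← image_univ, ← Finset.coe_univ,
    show (Finset.univ : Finset (Fin 7)) = insert 0 {1, 2, 3, 4, 5, 6} by decide,
    Finset.coe_insert, image_insert_eq]
  rfl

def vertices : Fin 7 → Finset (Fin 7) :=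
  ![{1, 3, 5}, {1, 4, 6}, {2, 3, 6}, {2, 4, 5}, {1, 2}, {3, 4}, {5, 6}]

theorem vertices_subset (i : Fin 7) : vertices i ⊆ {1, 2, 3, 4, 5, 6} := by
  revert i; decide

noncomputable def C (i : Fin 7) : Set (EuclideanSpace ℝ (Fin 3)) := convexHull ℝ (pt '' vertices i)

/-- `C i` lies in the plane `∑ⱼ normal i j * xⱼ = level i`. -/
def normal : Fin 7 → Fin 3 → ℤ :=
  ![![1, 1, 1], ![1, -1, -1], ![-1, 1, -1], ![-1, -1, 1], ![0, 1, 1], ![1, 0, 1], ![1, 1, 0]]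

def level : Fin 7 → ℤ := ![1, 1, 1, 1, 0, 0, 0]

def onPlane (i : Fin 7) : Finset (Fin 7) :=
  Finset.univ.filter fun k => ∑ j, normal i j * coords k j = level i

noncomputable def planeFunctional (i : Fin 7) : EuclideanSpace ℝ (Fin 3) →ₗ[ℝ] ℝ :=
  ∑ j, (normal i j : ℝ) • EuclideanSpace.projₗ j

theorem planeFunctional_pt (i k : Fin 7) :
    planeFunctional i (pt k) = ((∑ j, normal i j * coords k j : ℤ) : ℝ) := by
  simp [planeFunctional, pt_apply]

theorem vertices_subset_onPlane (i : Fin 7) : vertices i ⊆ onPlane i := by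
  revert i; decide

theorem onPlane_subset_insert_vertices (i : Fin 7) : onPlane i ⊆ insert 0 (vertices i) := by
  revert i; decide

theorem pt_mem_C_iff {i k : Fin 7} : pt k ∈ C i ↔ k ∈ onPlane i := by
  constructor
  · intro hk
    have hplane := convexHull_subset_setOf_eq (planeFunctional i) (c := level i) ?_ hk
    · rw [mem_ofPred_eq, planeFunctional_pt] at hplane
      exact Finset.mem_filter.2 ⟨Finset.mem_univ k, by exact_mod_cast hplane⟩
    · rintro _ ⟨l, hl, rfl⟩
      rw [planeFunctional_pt]
      exact_mod_cast (Finset.mem_filter.1 (vertices_subset_onPlane i hl)).2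
  · intro hk
    obtain rfl | hv := Finset.mem_insert.1 (onPlane_subset_insert_vertices i hk)
    · fin_cases i <;> first
        | exact absurd hk (by decide)
        | simpa [C, vertices, pt, image_insert_eq] using zero_mem_convexHull_pair_neg (e _)
    · exact subset_convexHull ℝ _ (mem_image_of_mem pt hv)

theorem C_inter_range (i : Fin 7) : C i ∩ range pt = pt '' onPlane i := by
  ext x
  constructor
  · rintro ⟨hx, k, rfl⟩
    exact mem_image_of_mem pt (pt_mem_C_iff.1 hx)
  · rintro ⟨k, hk, rfl⟩
    exact ⟨pt_mem_C_iff.2 hk, mem_range_self k⟩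

theorem C_injective : Function.Injective C := by
  have onPlane_injective : Function.Injective onPlane := by decide
  intro i j h
  have h' := C_inter_range i
  rw [h, C_inter_range j] at h'
  exact onPlane_injective (Finset.coe_injective (image_injective.2 pt_injective h'.symm))

theorem ncard_C_inter_C_inter_range {i j : Fin 7} (hij : i ≠ j) :
    (C i ∩ C j ∩ range pt).ncard = 1 := by
  have hcard : ∀ i j : Fin 7, i ≠ j → (onPlane i ∩ onPlane j).card = 1 := by decide
  rw [inter_inter_distrib_right, C_inter_range, C_inter_range, ← image_inter pt_injective,
    ← Finset.coe_inter, ncard_image_of_injective _ pt_injective, ncard_coe_finset]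
  exact hcard i j hij

end OctahedronThrackle

/-- Counterexample to the thrackle-of-convex-sets conjecture in `ℝ³`: with
`V = {±e₁, ±e₂, ±e₃}` (6 points), `W = V ∪ {0}`, the four triangles
`conv {e₁,e₂,e₃}`, `conv {e₁,-e₂,-e₃}`, `conv {-e₁,e₂,-e₃}`, `conv {-e₁,-e₂,e₃}`
and the three segments `conv {±eᵢ}` are seven pairwise distinct convex hulls of
subsets of `V` with `|Cᵢ ∩ Cⱼ ∩ W| = 1` for all `i ≠ j`, while `7 > |V| = 6`. -/
theorem thrackle_convex_sets_fails_in_R3 :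
    let e : Fin 3 → EuclideanSpace ℝ (Fin 3) := fun i => EuclideanSpace.single i (1 : ℝ)
    let V : Set (EuclideanSpace ℝ (Fin 3)) := {e 0, -e 0, e 1, -e 1, e 2, -e 2}
    let W : Set (EuclideanSpace ℝ (Fin 3)) := insert 0 V
    let C : Fin 7 → Set (EuclideanSpace ℝ (Fin 3)) :=
      ![convexHull ℝ {e 0, e 1, e 2}, convexHull ℝ {e 0, -e 1, -e 2},
        convexHull ℝ {-e 0, e 1, -e 2}, convexHull ℝ {-e 0, -e 1, e 2},
        convexHull ℝ {e 0, -e 0}, convexHull ℝ {e 1, -e 1}, convexHull ℝ {e 2, -e 2}]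
    V.ncard = 6 ∧ W.ncard = 7 ∧
    (∀ i, ∃ S : Set (EuclideanSpace ℝ (Fin 3)), S ⊆ V ∧ C i = convexHull ℝ S) ∧
    Function.Injective C ∧
    (∀ i j, i ≠ j → (C i ∩ C j ∩ W).ncard = 1) := by
  intro e V W C
  have hC : C = OctahedronThrackle.C := by
    funext i
    fin_cases i <;> simp [C, OctahedronThrackle.C, OctahedronThrackle.vertices,
      OctahedronThrackle.pt, OctahedronThrackle.e, e, image_insert_eq]
  have hV : V = OctahedronThrackle.pt '' ↑({1, 2, 3, 4, 5, 6} : Finset (Fin 7)) :=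
    OctahedronThrackle.image_pt_nonzero.symm
  have hW : W = range OctahedronThrackle.pt := by
    rw [OctahedronThrackle.range_pt, ← hV]
  rw [hC, hW, hV]
  refine ⟨?_, ?_, fun i => ⟨_, image_mono (OctahedronThrackle.vertices_subset i), rfl⟩,
    OctahedronThrackle.C_injective, fun i j => OctahedronThrackle.ncard_C_inter_C_inter_range⟩
  · rw [ncard_image_of_injective _ OctahedronThrackle.pt_injective, ncard_coe_finset]
    rfl
  · rw [ncard_range_of_injective OctahedronThrackle.pt_injective, Nat.card_eq_fintype_card,
      Fintype.card_fin]
end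

section
/- Let (P, L) be a finite projective plane: finite types of points and lines with a membership relation such that any two distinct points lie on a unique line, any two distinct lines meet in a unique point, and there exist four points no three of which are collinear (as in Mathlib's Configuration.ProjectivePlane). Let v : P → ℝ² be an injective map such that every point of v(P) is an extreme point of conv(v(P)) (the points are in convex position). For each line ℓ set C_ℓ = conv{v(p) : p ∈ ℓ}. Then: (i) the map ℓ ↦ C_ℓ is injective; (ii) for any two distinct lines ℓ ≠ ℓ', the set C_ℓ ∩ C_{ℓ'} ∩ v(P) has exactly one element. Hence, taking W = V = v(P), the sets {C_ℓ : ℓ ∈ L} form a thrackle of convex sets whose number of members equals |L| = |P| = |V|. -/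
/-!
A point of `v(P)` in convex position can only lie in the convex hull of a subset of `v(P)` if
it belongs to that subset, so `C ℓ ∩ v(P) = v(ℓ)`. Hence `C ℓ` determines the point set of `ℓ`,
which determines `ℓ`, and `C ℓ ∩ C ℓ' ∩ v(P) = v(ℓ ∩ ℓ')` is the image of the single common
point of two distinct lines.
-/

open Set

section ConvexPosition

variable {𝕜 E ι : Type*} [Field 𝕜] [LinearOrder 𝕜] [IsStrictOrderedRing 𝕜]
  [AddCommGroup E] [Module 𝕜 E]

theorem mem_of_mem_convexHull_of_mem_extremePoints {s t : Set E} {x : E} (hst : s ⊆ t)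
    (hx : x ∈ (convexHull 𝕜 t).extremePoints 𝕜) (hxs : x ∈ convexHull 𝕜 s) : x ∈ s :=
  extremePoints_convexHull_subset <|
    inter_extremePoints_subset_extremePoints_of_subset (convexHull_mono hst) ⟨hxs, hx⟩

theorem convexHull_image_inter_range {v : ι → E}
    (hv : ∀ i, v i ∈ (convexHull 𝕜 (range v)).extremePoints 𝕜) (S : Set ι) :
    convexHull 𝕜 (v '' S) ∩ range v = v '' S := by
  refine Subset.antisymm ?_ fun x hx => ⟨subset_convexHull 𝕜 _ hx, image_subset_range v S hx⟩
  rintro _ ⟨hS, i, rfl⟩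
  exact mem_of_mem_convexHull_of_mem_extremePoints (image_subset_range v S) (hv i) hS

end ConvexPosition

namespace Configuration

variable {P L : Type*} [Membership P L]

theorem HasPoints.setOf_mem_inter_setOf_mem [HasPoints P L] {ℓ ℓ' : L} (h : ℓ ≠ ℓ') :
    {p : P | p ∈ ℓ} ∩ {p | p ∈ ℓ'} = {mkPoint h} := by
  have hmk := mkPoint_ax (P := P) h
  refine Subset.antisymm ?_ (singleton_subset_iff.mpr hmk)
  rintro p ⟨hp : p ∈ ℓ, hp' : p ∈ ℓ'⟩
  exact (Nondegenerate.eq_or_eq hp hmk.1 hp' hmk.2).resolve_right h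

theorem ProjectivePlane.setOf_mem_injective [ProjectivePlane P L] [Finite P] [Finite L] :
    Function.Injective fun ℓ : L => {p : P | p ∈ ℓ} := by
  intro ℓ ℓ' (h : {p : P | p ∈ ℓ} = {p | p ∈ ℓ'})
  have : Nontrivial {p : P // p ∈ ℓ} :=
    Finite.one_lt_card_iff_nontrivial.mp (one_lt_two.trans (two_lt_pointCount P ℓ))
  obtain ⟨⟨p, hp⟩, ⟨q, hq⟩, hpq⟩ := this
  exact (Nondegenerate.eq_or_eq hp hq (h.subset hp) (h.subset hq)).resolve_left
    fun hpq' => hpq (Subtype.ext hpq')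

end Configuration

open Configuration in
/-- Tight examples for the thrackle-of-convex-sets conjecture from finite projective
planes: if `(P, L)` is a finite projective plane and `v : P → ℝ²` an injective map
placing the points in convex position (each `v p` is an extreme point of the convex
hull of the image), then the convex hulls `C ℓ = conv (v '' ℓ)` of the lines are
pairwise distinct, any two distinct ones meet the vertex set `v(P)` in exactly one
common point, and the number of these convex sets equals the number of vertices. -/
theorem projective_plane_thrackle (P L : Type*) [Membership P L]
    [Configuration.ProjectivePlane P L] [Fintype P] [Fintype L]
    (v : P → EuclideanSpace ℝ (Fin 2)) (hv : Function.Injective v)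
    (hconv : ∀ p : P, v p ∈ Set.extremePoints ℝ (convexHull ℝ (Set.range v))) :
    Function.Injective (fun ℓ : L => convexHull ℝ (v '' {p : P | p ∈ ℓ})) ∧
    (∀ ℓ ℓ' : L, ℓ ≠ ℓ' →
      (convexHull ℝ (v '' {p : P | p ∈ ℓ}) ∩ convexHull ℝ (v '' {p : P | p ∈ ℓ'}) ∩
        Set.range v).ncard = 1) ∧
    Fintype.card L = Fintype.card P ∧
    Fintype.card P = (Set.range v).ncard := by
  have hC := convexHull_image_inter_range hconv
  refine ⟨fun ℓ ℓ' h => ?_, fun ℓ ℓ' h => ?_, (ProjectivePlane.card_points_eq_card_lines P L).symm,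
    by rw [ncard_range_of_injective hv, Nat.card_eq_fintype_card]⟩
  · have h' := congrArg (· ∩ range v) h
    simp only [hC] at h'
    exact ProjectivePlane.setOf_mem_injective (hv.image_injective h')
  · rw [inter_inter_distrib_right, hC, hC, ← image_inter hv,
      HasPoints.setOf_mem_inter_setOf_mem h, image_singleton, ncard_singleton]
end

section
/- Let d ≥ 1 be an integer and c ≥ 0 a real number. Let V be a finite set and F a finite family of (d+1)-element subsets of V (the facets of a pure d-dimensional simplicial complex), and let R = {ρ ⊆ V : |ρ| = d and ρ ⊆ σ for some σ ∈ F} be the set of ridges. Suppose that for every vertex v ∈ V the link inequality d · |{σ ∈ F : v ∈ σ}| ≤ 2c · |{ρ ∈ R : v ∈ ρ}| holds. Then (d+1) · |F| ≤ 2c · |R|. -/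
/-!
Count the incidences between vertices and facets, and between vertices and ridges: each facet
has `d + 1` vertices and each ridge `d`, so summing the link inequalities over all vertices gives
`d (d + 1) |F| ≤ 2c d |R|`, and one divides by `d`.
-/

open Finset

namespace Finset

variable {α : Type*} [DecidableEq α]

theorem sum_card_filter_mem_eq_sum_card {s : Finset α} {B : Finset (Finset α)}
    (hB : ∀ t ∈ B, t ⊆ s) : ∑ a ∈ s, #{t ∈ B | a ∈ t} = ∑ t ∈ B, #t := by
  simp_rw [card_filter]
  rw [sum_comm]
  refine sum_congr rfl fun t ht => ?_
  rw [← card_filter, filter_mem_eq_inter, inter_eq_right.2 (hB t ht)]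

theorem sum_card_filter_mem_eq_mul_card {s : Finset α} {B : Finset (Finset α)} {k : ℕ}
    (hB : ∀ t ∈ B, t ⊆ s) (hk : ∀ t ∈ B, #t = k) : ∑ a ∈ s, #{t ∈ B | a ∈ t} = k * #B := by
  rw [sum_card_filter_mem_eq_sum_card hB, sum_congr rfl hk, sum_const, smul_eq_mul, mul_comm]

theorem mem_biUnion_powersetCard {F : Finset (Finset α)} {d : ℕ} {ρ : Finset α} :
    ρ ∈ F.biUnion (powersetCard d) ↔ #ρ = d ∧ ∃ σ ∈ F, ρ ⊆ σ := by
  simp only [mem_biUnion, mem_powersetCard]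
  exact ⟨fun ⟨σ, hσ, hρσ, hρ⟩ => ⟨hρ, σ, hσ, hρσ⟩, fun ⟨hρ, σ, hσ, hρσ⟩ => ⟨σ, hσ, hρσ, hρ⟩⟩

theorem coe_biUnion_powersetCard (F : Finset (Finset α)) (d : ℕ) :
    (F.biUnion (powersetCard d) : Set (Finset α)) = {ρ | #ρ = d ∧ ∃ σ ∈ F, ρ ⊆ σ} := by
  ext ρ
  exact mem_biUnion_powersetCard

end Finset

theorem Set.ncard_setOf_mem_and {α : Type*} (s : Finset α) (p : α → Prop) [DecidablePred p] :
    {x | x ∈ s ∧ p x}.ncard = #{x ∈ s | p x} := by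
  rw [← Set.ncard_coe_finset, coe_filter]

theorem link_inequality_transfer_general (d : ℕ) (hd : 1 ≤ d) (c : ℝ)
    {V : Type*}
    (F : Finset (Finset V)) (hF : ∀ σ ∈ F, σ.card = d + 1)
    (R : Set (Finset V))
    (hR : R = {ρ : Finset V | ρ.card = d ∧ ∃ σ ∈ F, ρ ⊆ σ})
    (hlink : ∀ v : V,
      (d : ℝ) * {σ : Finset V | σ ∈ F ∧ v ∈ σ}.ncard ≤
        2 * c * {ρ : Finset V | ρ ∈ R ∧ v ∈ ρ}.ncard) :
    ((d : ℝ) + 1) * F.card ≤ 2 * c * R.ncard := by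
  classical
  set S := F.biUnion id
  set ridges := F.biUnion (powersetCard d)
  rw [← coe_biUnion_powersetCard] at hR
  subst hR
  have facet_subset : ∀ σ ∈ F, σ ⊆ S := fun σ hσ => subset_biUnion_of_mem id hσ
  have ridge_subset : ∀ ρ ∈ ridges, ρ ⊆ S := fun ρ hρ => by
    obtain ⟨-, σ, hσ, hρσ⟩ := mem_biUnion_powersetCard.1 hρ
    exact hρσ.trans (facet_subset σ hσ)
  have ridge_card : ∀ ρ ∈ ridges, #ρ = d := fun ρ hρ => (mem_biUnion_powersetCard.1 hρ).1
  have hsum : (d : ℝ) * ∑ v ∈ S, (#{σ ∈ F | v ∈ σ} : ℝ) ≤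
      2 * c * ∑ v ∈ S, (#{ρ ∈ ridges | v ∈ ρ} : ℝ) := by
    rw [mul_sum, mul_sum]
    refine sum_le_sum fun v _ => ?_
    simpa only [Set.ncard_setOf_mem_and, mem_coe] using hlink v
  simp only [← Nat.cast_sum, sum_card_filter_mem_eq_mul_card facet_subset hF,
    sum_card_filter_mem_eq_mul_card ridge_subset ridge_card, Nat.cast_mul] at hsum
  rw [Set.ncard_coe_finset]
  refine le_of_mul_le_mul_left ?_ (show (0 : ℝ) < d by exact_mod_cast hd)
  push_cast at hsum
  linarith

/-- Double-counting transfer lemma: let `F` be the facet set of a pure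
`d`-dimensional complex (each facet has `d + 1` vertices) on a finite vertex set
`V`, with ridge set `R` (the `d`-element subsets of facets). If every vertex link
satisfies the thrackle-type inequality
`d · #(facets containing v) ≤ 2c · #(ridges containing v)`, then
`(d+1) · |F| ≤ 2c · |R|`. -/
theorem link_inequality_transfer (d : ℕ) (hd : 1 ≤ d) (c : ℝ) (hc : 0 ≤ c)
    {V : Type*} [Fintype V] [DecidableEq V]
    (F : Finset (Finset V)) (hF : ∀ σ ∈ F, σ.card = d + 1)
    (R : Set (Finset V))
    (hR : R = {ρ : Finset V | ρ.card = d ∧ ∃ σ ∈ F, ρ ⊆ σ})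
    (hlink : ∀ v : V,
      (d : ℝ) * {σ : Finset V | σ ∈ F ∧ v ∈ σ}.ncard ≤
        2 * c * {ρ : Finset V | ρ ∈ R ∧ v ∈ ρ}.ncard) :
    ((d : ℝ) + 1) * F.card ≤ 2 * c * R.ncard :=
  link_inequality_transfer_general d hd c F hF R hR hlink
end
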